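/- arXiv:2302.08783 — 8 statements merged into one kernel-verified Lean document; each statement's English description precedes it below -/
import Mathlib

section
/- Let f : R^d -> R be beta-smooth with minimum f_star, and let w_{t+1} = w_t - eta_t * g_t with AdaGrad stepsizes eta_t = eta / sqrt(gamma^2 + sum_{s=1}^t ||g_s||^2) for some eta, gamma > 0 and arbitrary vectors g_t. Then sum_{t=1}^T ∇f(w_t) · g_t <= gamma*(f(w_1)-f_star)/eta + (2*max_{t<=T}(f(w_t)-f_star)/eta + eta*beta) * sqrt(sum_{t=1}^T ||g_t||^2). -/
open Finset

lemma descent {d : ℕ} (β : ℝ) (f : EuclideanSpace ℝ (Fin d) → ℝ)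
    (hdiff : ∀ x, DifferentiableAt ℝ f x)
    (hsmooth : ∀ x y, ‖gradient f x - gradient f y‖ ≤ β * ‖x - y‖)
    (x y : EuclideanSpace ℝ (Fin d)) :
    f y ≤ f x + inner ℝ (gradient f x) (y - x) + β / 2 * ‖y - x‖ ^ 2 := by
  set v := y - x with hv
  set φ : ℝ → ℝ := fun t => f (x + t • v) - t * inner ℝ (gradient f x) v - β / 2 * t ^ 2 * ‖v‖ ^ 2 with hφ
  have hc : ∀ t : ℝ, HasDerivAt (fun t : ℝ => x + t • v) v t := by
    intro t
    simpa using ((hasDerivAt_id t).smul_const v).const_add x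
  have hder : ∀ t : ℝ, HasDerivAt φ
      ((inner ℝ (gradient f (x + t • v)) v : ℝ) - inner ℝ (gradient f x) v - β * t * ‖v‖ ^ 2) t := by
    intro t
    have h1 : HasDerivAt (fun t : ℝ => f (x + t • v)) (inner ℝ (gradient f (x + t • v)) v : ℝ) t := by
      have := ((hdiff (x + t • v)).hasGradientAt.hasFDerivAt).comp_hasDerivAt t (hc t)
      exact this
    have h2 : HasDerivAt (fun t : ℝ => t * (inner ℝ (gradient f x) v : ℝ))
        (inner ℝ (gradient f x) v : ℝ) t := by simpa using (hasDerivAt_id t).mul_const _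
    have h3 : HasDerivAt (fun t : ℝ => β / 2 * t ^ 2 * ‖v‖ ^ 2) (β * t * ‖v‖ ^ 2) t := by
      have := ((hasDerivAt_pow 2 t).const_mul (β / 2)).mul_const (‖v‖ ^ 2)
      refine this.congr_deriv ?_
      simp only [Nat.cast_ofNat, show (2:ℕ) - 1 = 1 from rfl, pow_one]; ring
    exact (h1.sub h2).sub h3
  have hanti : AntitoneOn φ (Set.Ici (0 : ℝ)) := by
    apply antitoneOn_of_deriv_nonpos (convex_Ici 0)
    · exact Continuous.continuousOn (by
        have : ∀ t, DifferentiableAt ℝ φ t := fun t => (hder t).differentiableAt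
        exact (Differentiable.continuous this))
    · intro t ht
      exact (hder t).differentiableAt.differentiableWithinAt
    · intro t ht
      rw [interior_Ici] at ht
      rw [(hder t).deriv]
      have hb : (inner ℝ (gradient f (x + t • v)) v : ℝ) - inner ℝ (gradient f x) v ≤ β * t * ‖v‖ ^ 2 := by
        have h1 : (inner ℝ (gradient f (x + t • v)) v : ℝ) - inner ℝ (gradient f x) v
            = inner ℝ (gradient f (x + t • v) - gradient f x) v := by
          rw [inner_sub_left]
        rw [h1]
        calc (inner ℝ (gradient f (x + t • v) - gradient f x) v : ℝ)
            ≤ ‖gradient f (x + t • v) - gradient f x‖ * ‖v‖ := real_inner_le_norm _ _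
          _ ≤ (β * ‖x + t • v - x‖) * ‖v‖ := by
              apply mul_le_mul_of_nonneg_right (hsmooth _ _) (norm_nonneg _)
          _ = β * t * ‖v‖ ^ 2 := by
              have : ‖x + t • v - x‖ = t * ‖v‖ := by
                simp [norm_smul, abs_of_pos (Set.mem_Ioi.mp ht)]
              rw [this]; ring
      linarith
  have h01 : φ 1 ≤ φ 0 := hanti (Set.mem_Ici.mpr le_rfl) (Set.mem_Ici.mpr zero_le_one) zero_le_one
  have e1 : φ 1 = f y - inner ℝ (gradient f x) v - β / 2 * ‖v‖ ^ 2 := by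
    simp [hφ, hv]
  have e0 : φ 0 = f x := by simp [hφ]
  rw [e1, e0] at h01
  linarith

lemma sqrt_add_le' (x y : ℝ) (hx : 0 ≤ x) (hy : 0 ≤ y) :
    Real.sqrt (x + y) ≤ Real.sqrt x + Real.sqrt y := by
  have h1 : x + y ≤ (Real.sqrt x + Real.sqrt y) ^ 2 := by
    nlinarith [Real.sq_sqrt hx, Real.sq_sqrt hy, Real.sqrt_nonneg x, Real.sqrt_nonneg y]
  have := Real.sqrt_le_sqrt h1
  rwa [Real.sqrt_sq (by positivity)] at this

lemma sumA (Δ a : ℕ → ℝ) (hΔ : ∀ t, 0 ≤ Δ t) (ha : ∀ t, a t ≤ a (t + 1))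
    (ha0 : ∀ t, 0 ≤ a t) (M : ℝ) :
    ∀ T, 1 ≤ T → (∀ t ∈ Icc 1 T, Δ t ≤ M) →
      ∑ t ∈ Icc 1 T, (Δ t - Δ (t + 1)) * a t
        ≤ Δ 1 * a 1 + M * (a T - a 1) - Δ (T + 1) * a T := by
  intro T hT
  induction T, hT using Nat.le_induction with
  | base => intro _; simp; ring_nf; simp
  | succ n hn ih =>
    intro hM
    rw [Finset.sum_Icc_succ_top (by omega)]
    have h1 : ∑ t ∈ Icc 1 n, (Δ t - Δ (t + 1)) * a t
        ≤ Δ 1 * a 1 + M * (a n - a 1) - Δ (n + 1) * a n :=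
      ih (fun t ht => hM t (Finset.mem_Icc.mpr ⟨(Finset.mem_Icc.mp ht).1, by
        have := (Finset.mem_Icc.mp ht).2; omega⟩))
    have h2 : Δ (n + 1) ≤ M := hM (n + 1) (Finset.mem_Icc.mpr ⟨by omega, le_rfl⟩)
    have h3 : a n ≤ a (n + 1) := ha n
    have h4 : 0 ≤ Δ (n + 2) := hΔ (n + 2)
    have h5 : 0 ≤ a (n + 1) := ha0 (n + 1)
    nlinarith [mul_le_mul_of_nonneg_right h2 (sub_nonneg.mpr h3)]

lemma sumB (b : ℕ → ℝ) (hb : ∀ t, 0 ≤ b t) (c : ℝ) (hc : 0 < c) (T : ℕ) :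
    ∑ t ∈ Icc 1 T, b t / Real.sqrt (c + ∑ s ∈ Icc 1 t, b s)
      ≤ 2 * (Real.sqrt (c + ∑ s ∈ Icc 1 T, b s) - Real.sqrt c) := by
  induction T with
  | zero => simp
  | succ n ih =>
    rw [Finset.sum_Icc_succ_top (by omega)]
    have hS : 0 ≤ ∑ s ∈ Icc 1 n, b s := Finset.sum_nonneg fun s _ => hb s
    set A := c + ∑ s ∈ Icc 1 n, b s with hA
    have hApos : 0 < A := by positivity
    have hBA : c + ∑ s ∈ Icc 1 (n + 1), b s = A + b (n + 1) := by
      rw [Finset.sum_Icc_succ_top (by omega)]; ring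
    rw [hBA]
    have hBpos : 0 < A + b (n + 1) := by have := hb (n + 1); linarith
    have key : b (n + 1) / Real.sqrt (A + b (n + 1))
        ≤ 2 * (Real.sqrt (A + b (n + 1)) - Real.sqrt A) := by
      rw [div_le_iff₀ (Real.sqrt_pos.mpr hBpos)]
      have h1 : 2 * Real.sqrt A * Real.sqrt (A + b (n + 1))
          ≤ Real.sqrt A ^ 2 + Real.sqrt (A + b (n + 1)) ^ 2 := two_mul_le_add_sq _ _
      have h2 : Real.sqrt A ^ 2 = A := Real.sq_sqrt hApos.le
      have h3 : Real.sqrt (A + b (n + 1)) ^ 2 = A + b (n + 1) := Real.sq_sqrt hBpos.le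
      nlinarith
    linarith

theorem nonconvex_regret_bound (d T : ℕ) (hT : 1 ≤ T) (β η γ fstar : ℝ)
    (hβ : 0 ≤ β) (hη : 0 < η) (hγ : 0 < γ)
    (f : EuclideanSpace ℝ (Fin d) → ℝ)
    (hdiff : ∀ x, DifferentiableAt ℝ f x)
    (hsmooth : ∀ x y, ‖gradient f x - gradient f y‖ ≤ β * ‖x - y‖)
    (hmin : ∀ w, fstar ≤ f w) (hatt : ∃ w, f w = fstar)
    (g w : ℕ → EuclideanSpace ℝ (Fin d)) (ηt : ℕ → ℝ)
    (hηt : ∀ t, ηt t = η / Real.sqrt (γ ^ 2 + ∑ s ∈ Icc 1 t, ‖g s‖ ^ 2))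
    (hw : ∀ t, 1 ≤ t → w (t + 1) = w t - ηt t • g t) :
    ∑ t ∈ Icc 1 T, (inner ℝ (gradient f (w t)) (g t) : ℝ) ≤
      γ * (f (w 1) - fstar) / η
        + (2 * ((Icc 1 T).sup' (Finset.nonempty_Icc.mpr hT) fun t => f (w t) - fstar) / η
            + η * β) * Real.sqrt (∑ t ∈ Icc 1 T, ‖g t‖ ^ 2) := by
  set S : ℕ → ℝ := fun t => γ ^ 2 + ∑ s ∈ Icc 1 t, ‖g s‖ ^ 2 with hSdef
  set Q : ℝ := ∑ t ∈ Icc 1 T, ‖g t‖ ^ 2 with hQdef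
  have hQnn : 0 ≤ Q := Finset.sum_nonneg fun s _ => by positivity
  have hSpos : ∀ t, 0 < S t := by
    intro t
    have : 0 ≤ ∑ s ∈ Icc 1 t, ‖g s‖ ^ 2 := Finset.sum_nonneg fun s _ => by positivity
    have := hγ
    simp only [hSdef]
    positivity
  have hSmono : ∀ t, S t ≤ S (t + 1) := by
    intro t
    simp only [hSdef]
    rw [Finset.sum_Icc_succ_top (by omega : 1 ≤ t + 1)]
    nlinarith [norm_nonneg (g (t + 1)), sq_nonneg ‖g (t + 1)‖]
  set Δ : ℕ → ℝ := fun t => f (w t) - fstar with hΔdef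
  set a : ℕ → ℝ := fun t => Real.sqrt (S t) / η with hadef
  have hΔnn : ∀ t, 0 ≤ Δ t := fun t => sub_nonneg.mpr (hmin _)
  have hamono : ∀ t, a t ≤ a (t + 1) := by
    intro t
    simp only [hadef]
    exact div_le_div_of_nonneg_right (Real.sqrt_le_sqrt (hSmono t)) hη.le
  have ha0 : ∀ t, 0 ≤ a t := fun t => by
    simp only [hadef]; positivity
  set M : ℝ := (Icc 1 T).sup' (Finset.nonempty_Icc.mpr hT) fun t => f (w t) - fstar with hMdef
  have hM : ∀ t ∈ Icc 1 T, Δ t ≤ M := fun t ht => Finset.le_sup' _ ht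
  have hM0 : 0 ≤ M := le_trans (hΔnn 1) (hM 1 (Finset.mem_Icc.mpr ⟨le_rfl, hT⟩))
  -- per-step inequality
  have step : ∀ t ∈ Icc 1 T, (inner ℝ (gradient f (w t)) (g t) : ℝ)
      ≤ (Δ t - Δ (t + 1)) * a t + β / 2 * (η * (‖g t‖ ^ 2 / Real.sqrt (S t))) := by
    intro t ht
    have ht1 : 1 ≤ t := (Finset.mem_Icc.mp ht).1
    have hsq : 0 < Real.sqrt (S t) := Real.sqrt_pos.mpr (hSpos t)
    have he : 0 < ηt t := by rw [hηt t]; exact div_pos hη hsq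
    have hdesc := descent β f hdiff hsmooth (w t) (w (t + 1))
    have hwd : w (t + 1) - w t = -(ηt t • g t) := by
      rw [hw t ht1]; abel
    rw [hwd] at hdesc
    have hinner : (inner ℝ (gradient f (w t)) (-(ηt t • g t)) : ℝ)
        = -(ηt t * inner ℝ (gradient f (w t)) (g t)) := by
      rw [inner_neg_right, real_inner_smul_right]
    have hnorm : ‖-(ηt t • g t)‖ ^ 2 = ηt t ^ 2 * ‖g t‖ ^ 2 := by
      rw [norm_neg, norm_smul, mul_pow, Real.norm_eq_abs, sq_abs]
    rw [hinner, hnorm] at hdesc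
    -- hdesc : f (w (t+1)) ≤ f (w t) - ηt t * I + β/2 * (ηt t ^2 * ‖g t‖^2)
    have hI : ηt t * (inner ℝ (gradient f (w t)) (g t) : ℝ)
        ≤ (Δ t - Δ (t + 1)) + β / 2 * (ηt t ^ 2 * ‖g t‖ ^ 2) := by
      simp only [hΔdef]; linarith
    have heq : ηt t = η / Real.sqrt (S t) := hηt t
    have h1 : (Δ t - Δ (t + 1)) / ηt t = (Δ t - Δ (t + 1)) * a t := by
      rw [heq]
      simp only [hadef]
      field_simp
    have h2 : β / 2 * (ηt t * ‖g t‖ ^ 2) = β / 2 * (η * (‖g t‖ ^ 2 / Real.sqrt (S t))) := by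
      rw [heq]; ring
    calc (inner ℝ (gradient f (w t)) (g t) : ℝ)
        = ηt t * (inner ℝ (gradient f (w t)) (g t) : ℝ) / ηt t := by
          field_simp
      _ ≤ ((Δ t - Δ (t + 1)) + β / 2 * (ηt t ^ 2 * ‖g t‖ ^ 2)) / ηt t := by
          exact div_le_div_of_nonneg_right hI he.le
      _ = (Δ t - Δ (t + 1)) / ηt t + β / 2 * (ηt t * ‖g t‖ ^ 2) := by
          field_simp
      _ = (Δ t - Δ (t + 1)) * a t + β / 2 * (η * (‖g t‖ ^ 2 / Real.sqrt (S t))) := by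
          rw [h1, h2]
  have hsum : ∑ t ∈ Icc 1 T, (inner ℝ (gradient f (w t)) (g t) : ℝ)
      ≤ ∑ t ∈ Icc 1 T, (Δ t - Δ (t + 1)) * a t
        + β / 2 * η * ∑ t ∈ Icc 1 T, ‖g t‖ ^ 2 / Real.sqrt (S t) := by
    rw [mul_sum]
    rw [← Finset.sum_add_distrib]
    apply Finset.sum_le_sum
    intro t ht
    have := step t ht
    linarith
  -- bound first sum
  have hA := sumA Δ a hΔnn hamono ha0 M T hT hM
  have hfirst : ∑ t ∈ Icc 1 T, (Δ t - Δ (t + 1)) * a t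
      ≤ γ * Δ 1 / η + M * Real.sqrt Q / η := by
    have hdrop : 0 ≤ Δ (T + 1) * a T := mul_nonneg (hΔnn _) (ha0 _)
    have hΔ1M : Δ 1 ≤ M := hM 1 (Finset.mem_Icc.mpr ⟨le_rfl, hT⟩)
    have ha1lb : γ / η ≤ a 1 := by
      simp only [hadef]
      apply div_le_div_of_nonneg_right _ hη.le
      have hγS : γ ^ 2 ≤ S 1 := by
        have : 0 ≤ ∑ s ∈ Icc 1 1, ‖g s‖ ^ 2 := Finset.sum_nonneg fun s _ => by positivity
        simp only [hSdef]
        linarith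
      have h := Real.sqrt_le_sqrt hγS
      rwa [Real.sqrt_sq hγ.le] at h
    have haTub : a T ≤ (γ + Real.sqrt Q) / η := by
      simp only [hadef]
      apply div_le_div_of_nonneg_right _ hη.le
      have h1 : Real.sqrt (S T) ≤ Real.sqrt (γ ^ 2) + Real.sqrt Q := by
        simp only [hSdef, ← hQdef]
        exact sqrt_add_le' _ _ (by positivity) hQnn
      rwa [Real.sqrt_sq hγ.le] at h1
    have key1 : (Δ 1 - M) * a 1 ≤ (Δ 1 - M) * (γ / η) := by
      apply mul_le_mul_of_nonpos_left ha1lb (by linarith)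
    have key2 : M * a T ≤ M * ((γ + Real.sqrt Q) / η) :=
      mul_le_mul_of_nonneg_left haTub hM0
    have expand : Δ 1 * a 1 + M * (a T - a 1) = (Δ 1 - M) * a 1 + M * a T := by ring
    have final : Δ 1 * a 1 + M * (a T - a 1)
        ≤ γ * Δ 1 / η + M * Real.sqrt Q / η := by
      rw [expand]
      have : (Δ 1 - M) * (γ / η) + M * ((γ + Real.sqrt Q) / η)
          = γ * Δ 1 / η + M * Real.sqrt Q / η := by ring
      linarith
    calc ∑ t ∈ Icc 1 T, (Δ t - Δ (t + 1)) * a t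
        ≤ Δ 1 * a 1 + M * (a T - a 1) - Δ (T + 1) * a T := hA
      _ ≤ Δ 1 * a 1 + M * (a T - a 1) := by linarith
      _ ≤ γ * Δ 1 / η + M * Real.sqrt Q / η := final
  -- bound second sum
  have hB := sumB (fun t => ‖g t‖ ^ 2) (fun t => by positivity) (γ ^ 2) (by positivity) T
  have hsecond : β / 2 * η * ∑ t ∈ Icc 1 T, ‖g t‖ ^ 2 / Real.sqrt (S t)
      ≤ η * β * Real.sqrt Q := by
    have hsub : Real.sqrt (γ ^ 2 + Q) - Real.sqrt (γ ^ 2) ≤ Real.sqrt Q := by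
      have := sqrt_add_le' _ _ (by positivity : (0:ℝ) ≤ γ ^ 2) hQnn
      linarith
    have hB' : ∑ t ∈ Icc 1 T, ‖g t‖ ^ 2 / Real.sqrt (S t) ≤ 2 * Real.sqrt Q := by
      calc ∑ t ∈ Icc 1 T, ‖g t‖ ^ 2 / Real.sqrt (S t)
          ≤ 2 * (Real.sqrt (γ ^ 2 + Q) - Real.sqrt (γ ^ 2)) := by
            simpa only [hSdef, hQdef] using hB
        _ ≤ 2 * Real.sqrt Q := by linarith
    calc β / 2 * η * ∑ t ∈ Icc 1 T, ‖g t‖ ^ 2 / Real.sqrt (S t)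
        ≤ β / 2 * η * (2 * Real.sqrt Q) := by
          apply mul_le_mul_of_nonneg_left hB' (by positivity)
      _ = η * β * Real.sqrt Q := by ring
  -- combine
  have hMQ : M * Real.sqrt Q / η ≤ 2 * M / η * Real.sqrt Q := by
    rw [div_mul_eq_mul_div, mul_comm (2 * M) (Real.sqrt Q)]
    apply div_le_div_of_nonneg_right _ hη.le
    nlinarith [Real.sqrt_nonneg Q]
  calc ∑ t ∈ Icc 1 T, (inner ℝ (gradient f (w t)) (g t) : ℝ)
      ≤ ∑ t ∈ Icc 1 T, (Δ t - Δ (t + 1)) * a t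
        + β / 2 * η * ∑ t ∈ Icc 1 T, ‖g t‖ ^ 2 / Real.sqrt (S t) := hsum
    _ ≤ (γ * Δ 1 / η + M * Real.sqrt Q / η) + η * β * Real.sqrt Q := by
        linarith
    _ ≤ γ * Δ 1 / η + 2 * M / η * Real.sqrt Q + η * β * Real.sqrt Q := by
        linarith
    _ = γ * (f (w 1) - fstar) / η + (2 * M / η + η * β) * Real.sqrt Q := by
        simp only [hΔdef]; ring
end

section
/- Let eta_s = eta / sqrt(G_{s-1}^2 + ||g_s||^2) and tilde_eta_s = eta / sqrt(G_{s-1}^2 + (1+sigma_1^2)||∇f(w_s)||^2 + sigma_0^2), where G_{s-1}^2 = gamma^2 + sum_{k<s} ||g_k||^2 and ||g_s - ∇f(w_s)||^2 <= sigma_0^2 + sigma_1^2 ||∇f(w_s)||^2. Then |tilde_eta_s - eta_s| <= 2 * tilde_eta_s * sqrt(sigma_0^2 + sigma_1^2 ||∇f(w_s)||^2) / G_s, where G_s^2 = G_{s-1}^2 + ||g_s||^2. -/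
open Finset

set_option maxHeartbeats 1000000 in
theorem decorrelated_stepsize_diff (d : ℕ) (η γ σ0 σ1 : ℝ)
    (hη : 0 < η) (hγ : 0 < γ) (hσ0 : 0 ≤ σ0) (hσ1 : 0 ≤ σ1)
    (f : EuclideanSpace ℝ (Fin d) → ℝ) (w g : ℕ → EuclideanSpace ℝ (Fin d))
    (s : ℕ) (hs : 1 ≤ s)
    (hnoise : ‖g s - gradient f (w s)‖ ^ 2 ≤ σ0 ^ 2 + σ1 ^ 2 * ‖gradient f (w s)‖ ^ 2)
    (Gprev Gs ηs tηs : ℝ)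
    (hGprev : Gprev = Real.sqrt (γ ^ 2 + ∑ k ∈ Icc 1 (s - 1), ‖g k‖ ^ 2))
    (hGs : Gs = Real.sqrt (Gprev ^ 2 + ‖g s‖ ^ 2))
    (hηs : ηs = η / Gs)
    (htηs : tηs = η / Real.sqrt (Gprev ^ 2 + (1 + σ1 ^ 2) * ‖gradient f (w s)‖ ^ 2 + σ0 ^ 2)) :
    |tηs - ηs| ≤ 2 * tηs * Real.sqrt (σ0 ^ 2 + σ1 ^ 2 * ‖gradient f (w s)‖ ^ 2) / Gs := by
  have hGN0 : |‖g s‖ - ‖gradient f (w s)‖| ≤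
      Real.sqrt (σ0 ^ 2 + σ1 ^ 2 * ‖gradient f (w s)‖ ^ 2) := by
    refine le_trans (abs_norm_sub_norm_le _ _) ?_
    rw [← Real.sqrt_sq (norm_nonneg (g s - gradient f (w s)))]
    exact Real.sqrt_le_sqrt hnoise
  generalize hNdef : ‖gradient f (w s)‖ = N at hGN0 htηs ⊢
  generalize hGdef : ‖g s‖ = G at hGN0 hGs
  have hN : 0 ≤ N := hNdef ▸ norm_nonneg _
  have hG : 0 ≤ G := hGdef ▸ norm_nonneg _
  have hσ2 : (0:ℝ) ≤ σ0 ^ 2 + σ1 ^ 2 * N ^ 2 := by positivity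
  set σ := Real.sqrt (σ0 ^ 2 + σ1 ^ 2 * N ^ 2) with hσdef
  have hσ : 0 ≤ σ := Real.sqrt_nonneg _
  have hσsq : σ ^ 2 = σ0 ^ 2 + σ1 ^ 2 * N ^ 2 := Real.sq_sqrt hσ2
  have hPpos : 0 < Gprev ^ 2 := by
    have hsum : (0:ℝ) ≤ ∑ k ∈ Icc 1 (s - 1), ‖g k‖ ^ 2 :=
      Finset.sum_nonneg fun k _ => sq_nonneg _
    rw [hGprev, Real.sq_sqrt (add_nonneg (sq_nonneg γ) hsum)]
    nlinarith [sq_nonneg γ, hγ]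
  set A := Gprev ^ 2 + G ^ 2 with hAdef
  set B := Gprev ^ 2 + (1 + σ1 ^ 2) * N ^ 2 + σ0 ^ 2 with hBdef
  have hApos : 0 < A := by nlinarith [sq_nonneg G]
  have hBpos : 0 < B := by nlinarith [sq_nonneg N, sq_nonneg σ1, sq_nonneg σ0, mul_nonneg (sq_nonneg σ1) (sq_nonneg N)]
  set a := Real.sqrt A with hadef
  set b := Real.sqrt B with hbdef
  have ha : 0 < a := Real.sqrt_pos.mpr hApos
  have hb : 0 < b := Real.sqrt_pos.mpr hBpos
  have ha2 : a ^ 2 = A := Real.sq_sqrt hApos.le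
  have hb2 : b ^ 2 = B := Real.sq_sqrt hBpos.le
  -- bounds
  have hGN : |G - N| ≤ σ := hGN0
  have hGa : G ≤ a := by
    rw [hadef, ← Real.sqrt_sq hG]
    exact Real.sqrt_le_sqrt (by rw [hAdef]; nlinarith [hPpos])
  have hNb : N ≤ b := by
    rw [hbdef, ← Real.sqrt_sq hN]
    apply Real.sqrt_le_sqrt
    nlinarith [mul_nonneg (sq_nonneg σ1) (sq_nonneg N), sq_nonneg σ0]
  have hσb : σ ≤ b := by
    rw [hbdef, ← Real.sqrt_sq hσ, hσsq]
    apply Real.sqrt_le_sqrt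
    nlinarith [sq_nonneg N]
  -- key inequality
  have hkey : |A - B| ≤ 2 * σ * (a + b) := by
    have h1 : |G ^ 2 - N ^ 2| ≤ σ * (G + N) := by
      have : |G ^ 2 - N ^ 2| = |G - N| * (G + N) := by
        rw [show G ^ 2 - N ^ 2 = (G - N) * (G + N) by ring, abs_mul,
          abs_of_nonneg (by linarith : (0:ℝ) ≤ G + N)]
      rw [this]
      exact mul_le_mul_of_nonneg_right hGN (by linarith)
    have h2 : A - B = G ^ 2 - N ^ 2 - σ ^ 2 := by rw [hAdef, hBdef, hσsq]; ring
    calc |A - B| ≤ |G ^ 2 - N ^ 2| + σ ^ 2 := by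
            rw [h2]; have := abs_sub (G ^ 2 - N ^ 2) (σ ^ 2)
            calc |G ^ 2 - N ^ 2 - σ ^ 2| ≤ |G ^ 2 - N ^ 2| + |σ ^ 2| := abs_sub _ _
              _ = |G ^ 2 - N ^ 2| + σ ^ 2 := by rw [abs_of_nonneg (sq_nonneg σ)]
      _ ≤ σ * (G + N) + σ * σ := by nlinarith [sq_nonneg σ]
      _ = σ * (G + N + σ) := by ring
      _ ≤ σ * (a + b + b) := by
            apply mul_le_mul_of_nonneg_left _ hσ; linarith
      _ ≤ 2 * σ * (a + b) := by nlinarith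
  have hab : |a - b| ≤ 2 * σ := by
    have h3 : |a - b| * (a + b) = |A - B| := by
      rw [← abs_of_pos (by linarith : (0:ℝ) < a + b), ← abs_mul]
      congr 1; nlinarith [ha2, hb2]
    have h4 : |a - b| * (a + b) ≤ 2 * σ * (a + b) := by rw [h3]; exact hkey
    exact le_of_mul_le_mul_right h4 (by linarith)
  -- finish
  rw [htηs, hηs, hGs]
  have hdiff : η / b - η / a = η * (a - b) / (a * b) := by
    field_simp
  rw [hdiff, abs_div, abs_mul, abs_of_pos hη, abs_of_pos (mul_pos ha hb)]
  have hRHS : 2 * (η / b) * σ / a = η * (2 * σ) / (a * b) := by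
    field_simp; try ring
  rw [hRHS]
  gcongr <;> first | exact hab | positivity
end

section
/- Under the hypotheses of the decorrelated-stepsize lemma (bounded affine noise, AdaGrad stepsizes eta_s, proxy stepsizes tilde_eta_s, and beta-smooth f with minimum f_star), for all t >= 1: sum_{s=1}^t |tilde_eta_s - eta_s| * (∇f(w_s) · g_s) <= (1/4) max_{s<=t}(f(w_s)-f_star) + (1/2) sum_{s=1}^t tilde_eta_s ||∇f(w_s)||^2 + 2*eta*sigma_0 * sum_{s=1}^t ||g_s||^2/G_s^2 + 8*eta^2*beta*sigma_1^2 * (sum_{s=1}^t ||g_s||^2/G_s^2)^2. -/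
open Finset

section Aux

variable {E : Type*} [NormedAddCommGroup E] [InnerProductSpace ℝ E] [CompleteSpace E]

local notation "⟪" x ", " y "⟫" => @inner ℝ _ _ x y

/-- Derivative of `f` along a line. -/
lemma aux_hasDerivAt_line (f : E → ℝ) (hdiff : ∀ x, DifferentiableAt ℝ f x)
    (x v : E) (t : ℝ) :
    HasDerivAt (fun s : ℝ => f (x + s • v)) ⟪gradient f (x + t • v), v⟫ t := by
  have h1 : HasFDerivAt f (InnerProductSpace.toDual ℝ E (gradient f (x + t • v))) (x + t • v) :=
    (hdiff (x + t • v)).hasGradientAt.hasFDerivAt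
  have h3 : HasDerivAt (fun s : ℝ => x + s • v) v t := by
    simpa using ((hasDerivAt_id t).smul_const v).const_add x
  have := h1.comp_hasDerivAt t h3
  rw [InnerProductSpace.toDual_apply_apply] at this
  exact this

/-- Descent lemma for β-smooth functions. -/
lemma aux_descent (f : E → ℝ) (β : ℝ) (hdiff : ∀ x, DifferentiableAt ℝ f x)
    (hsmooth : ∀ x y, ‖gradient f x - gradient f y‖ ≤ β * ‖x - y‖)
    (x v : E) :
    f (x + v) ≤ f x + ⟪gradient f x, v⟫ + β / 2 * ‖v‖ ^ 2 := by
  set c : ℝ := ⟪gradient f x, v⟫ with hc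
  set dcoef : ℝ := β / 2 * ‖v‖ ^ 2 with hd
  set ψ : ℝ → ℝ := fun t => f (x + t • v) - t * c - dcoef * t ^ 2 with hψ
  have hψ' : ∀ t : ℝ, HasDerivAt ψ (⟪gradient f (x + t • v), v⟫ - c - dcoef * (2 * t)) t := by
    intro t
    have h1 := aux_hasDerivAt_line f hdiff x v t
    have h2 : HasDerivAt (fun s : ℝ => s * c) c t := hasDerivAt_mul_const c
    have h3 : HasDerivAt (fun s : ℝ => dcoef * s ^ 2) (dcoef * (2 * t)) t := by
      simpa using ((hasDerivAt_pow 2 t).const_mul dcoef)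
    exact (h1.sub h2).sub h3
  have hanti : AntitoneOn ψ (Set.Icc (0 : ℝ) 1) := by
    apply antitoneOn_of_deriv_nonpos (convex_Icc 0 1)
    · intro t _
      exact ((hψ' t).differentiableAt).continuousAt.continuousWithinAt
    · intro t _
      exact ((hψ' t).differentiableAt).differentiableWithinAt
    · intro t htmem
      rw [interior_Icc] at htmem
      obtain ⟨ht0, ht1⟩ := htmem
      rw [(hψ' t).deriv]
      have hib : ⟪gradient f (x + t • v), v⟫ - c ≤ β * t * ‖v‖ ^ 2 := by
        have h4 : ⟪gradient f (x + t • v), v⟫ - c = ⟪gradient f (x + t • v) - gradient f x, v⟫ := by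
          rw [hc, inner_sub_left]
        rw [h4]
        calc ⟪gradient f (x + t • v) - gradient f x, v⟫
            ≤ ‖gradient f (x + t • v) - gradient f x‖ * ‖v‖ := real_inner_le_norm _ _
          _ ≤ (β * ‖(x + t • v) - x‖) * ‖v‖ := by
              apply mul_le_mul_of_nonneg_right (hsmooth _ _) (norm_nonneg _)
          _ = β * t * ‖v‖ ^ 2 := by
              have : ‖(x + t • v) - x‖ = t * ‖v‖ := by
                simp [norm_smul, abs_of_pos ht0]
              rw [this]; ring
      have : dcoef * (2 * t) = β * t * ‖v‖ ^ 2 := by rw [hd]; ring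
      linarith
  have h01 : ψ 1 ≤ ψ 0 :=
    hanti (Set.mem_Icc.mpr ⟨le_refl 0, zero_le_one⟩) (Set.mem_Icc.mpr ⟨zero_le_one, le_refl 1⟩)
      zero_le_one
  have hψ0 : ψ 0 = f x := by simp [hψ]
  have hψ1 : ψ 1 = f (x + v) - c - dcoef := by simp [hψ]
  rw [hψ0, hψ1] at h01
  linarith

/-- β-smooth function with min value `fstar`: `‖∇f‖² ≤ 2β (f - fstar)`. -/
lemma aux_pl (f : E → ℝ) (β fstar : ℝ) (hβ : 0 ≤ β)
    (hdiff : ∀ x, DifferentiableAt ℝ f x)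
    (hsmooth : ∀ x y, ‖gradient f x - gradient f y‖ ≤ β * ‖x - y‖)
    (hmin : ∀ x, fstar ≤ f x) (hatt : ∃ x, f x = fstar) (x : E) :
    ‖gradient f x‖ ^ 2 ≤ 2 * β * (f x - fstar) := by
  rcases eq_or_lt_of_le hβ with hβ0 | hβpos
  · -- β = 0 : gradient is constant, zero at the minimizer
    obtain ⟨x0, hx0⟩ := hatt
    have hloc : IsLocalMin f x0 := Filter.Eventually.of_forall (fun y => by
      rw [hx0]; exact hmin y)
    have hf0 : fderiv ℝ f x0 = 0 := hloc.fderiv_eq_zero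
    have hg0 : gradient f x0 = 0 := by
      rw [gradient, hf0, map_zero]
    have hgx : gradient f x = 0 := by
      have := hsmooth x x0
      rw [← hβ0] at this
      have h0 : ‖gradient f x - gradient f x0‖ ≤ 0 := by simpa using this
      have := le_antisymm h0 (norm_nonneg _)
      have hxx := norm_eq_zero.mp this
      have : gradient f x = gradient f x0 := sub_eq_zero.mp hxx
      rw [this, hg0]
    rw [hgx]
    have : fstar ≤ f x := hmin x
    rw [← hβ0]
    simp
  · -- β > 0 : descent step with v = -(1/β) ∇f x
    set gx := gradient f x with hgx
    set v : E := -(β⁻¹ • gx) with hv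
    have hdes := aux_descent f β hdiff hsmooth x v
    have hiv : ⟪gx, v⟫ = -(β⁻¹ * ‖gx‖ ^ 2) := by
      rw [hv, inner_neg_right, real_inner_smul_right, real_inner_self_eq_norm_sq]
    have hnv : ‖v‖ ^ 2 = β⁻¹ ^ 2 * ‖gx‖ ^ 2 := by
      rw [hv, norm_neg, norm_smul, mul_pow]
      congr 1
      rw [Real.norm_eq_abs, sq_abs]
    have hstar : fstar ≤ f (x + v) := hmin _
    rw [hiv, hnv] at hdes
    have hβne : β ≠ 0 := ne_of_gt hβpos
    have e : β / 2 * (β⁻¹ ^ 2 * ‖gx‖ ^ 2) = β⁻¹ * ‖gx‖ ^ 2 / 2 := by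
      field_simp
    rw [e] at hdes
    have h1 : β⁻¹ * ‖gx‖ ^ 2 ≤ 2 * (f x - fstar) := by linarith
    have h2 := mul_le_mul_of_nonneg_left h1 hβpos.le
    have e2 : β * (β⁻¹ * ‖gx‖ ^ 2) = ‖gx‖ ^ 2 := by field_simp
    rw [e2] at h2
    linarith


/-- Bound on the difference of the squared accumulators. -/
lemma aux_num_bound (N gn Q : ℝ) (hN0 : 0 ≤ N) (hg0 : 0 ≤ gn) (hQ0 : 0 ≤ Q)
    (hgNQ : gn ≤ N + Q) (hNgQ : N ≤ gn + Q) :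
    |gn ^ 2 - N ^ 2 - Q ^ 2| ≤ 2 * Q * (gn + Q) := by
  rw [abs_le]
  constructor
  · nlinarith [mul_self_le_mul_self hN0 hNgQ, hQ0, hg0]
  · nlinarith [mul_self_le_mul_self hg0 hgNQ,
      mul_le_mul_of_nonneg_right hNgQ hQ0, hQ0, hg0]

/-- Key per-step real inequality. -/
lemma aux_step (N gn Q Gs tG : ℝ) (hN0 : 0 ≤ N) (hg0 : 0 ≤ gn) (hQ0 : 0 ≤ Q)
    (hGs : 0 < Gs) (htGpos : 0 < tG) (hgG : gn ≤ Gs) (hNtG : N ≤ tG) (hQtG : Q ≤ tG)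
    (hgNQ : gn ≤ N + Q) (hNgQ : N ≤ gn + Q) :
    |gn ^ 2 - N ^ 2 - Q ^ 2| * N * gn / (tG * Gs * (Gs + tG)) ≤
      N ^ 2 / (2 * tG) + 2 * Q * (gn ^ 2 / Gs ^ 2) := by
  have habs := aux_num_bound N gn Q hN0 hg0 hQ0 hgNQ hNgQ
  set c : ℝ := Real.sqrt (Q * tG) with hcdef
  have hc0 : 0 ≤ c := Real.sqrt_nonneg _
  have hc2 : c ^ 2 = Q * tG := Real.sq_sqrt (by positivity)
  have key2 : Q * (gn + Q) ≤ c * (Gs + tG) := by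
    have hsq : (Q * (gn + Q)) ^ 2 ≤ (c * (Gs + tG)) ^ 2 := by
      have e1 : (c * (Gs + tG)) ^ 2 = Q * tG * (Gs + tG) ^ 2 := by
        rw [mul_pow, hc2]
      rw [e1]
      have ha : gn + Q ≤ Gs + tG := by linarith
      have hb : (gn + Q) ^ 2 ≤ (Gs + tG) ^ 2 := by nlinarith [hg0, hQ0]
      have hc : Q * (gn + Q) ^ 2 ≤ tG * (Gs + tG) ^ 2 :=
        mul_le_mul hQtG hb (by positivity) htGpos.le
      nlinarith [mul_le_mul_of_nonneg_left hc hQ0]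
    have h2 : 0 ≤ Q * (gn + Q) := by positivity
    have h3 : 0 ≤ c * (Gs + tG) := by positivity
    calc Q * (gn + Q) = Real.sqrt ((Q * (gn + Q)) ^ 2) := (Real.sqrt_sq h2).symm
      _ ≤ Real.sqrt ((c * (Gs + tG)) ^ 2) := Real.sqrt_le_sqrt hsq
      _ = c * (Gs + tG) := Real.sqrt_sq h3
  have key1 : 4 * N * Gs * gn * c ≤ N ^ 2 * Gs ^ 2 + 4 * Q * tG * gn ^ 2 := by
    nlinarith [sq_nonneg (N * Gs - 2 * gn * c), hc2]
  have polykey : 4 * Q * (gn + Q) * N * gn * Gs ≤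
      N ^ 2 * Gs ^ 2 * (Gs + tG) + 4 * Q * tG * gn ^ 2 * (Gs + tG) := by
    have t1 := mul_le_mul_of_nonneg_right key2 (show 0 ≤ 4 * N * gn * Gs by positivity)
    have t2 := mul_le_mul_of_nonneg_left key1 (show 0 ≤ Gs + tG by positivity)
    nlinarith [t1, t2]
  have key : 2 * |gn ^ 2 - N ^ 2 - Q ^ 2| * N * gn * Gs ≤
      N ^ 2 * Gs ^ 2 * (Gs + tG) + 4 * Q * tG * gn ^ 2 * (Gs + tG) := by
    have h1 := mul_le_mul_of_nonneg_right habs (show 0 ≤ 2 * N * gn * Gs by positivity)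
    nlinarith [polykey, h1]
  rw [← sub_nonneg]
  have heq : N ^ 2 / (2 * tG) + 2 * Q * (gn ^ 2 / Gs ^ 2)
      - |gn ^ 2 - N ^ 2 - Q ^ 2| * N * gn / (tG * Gs * (Gs + tG)) =
      (N ^ 2 * Gs ^ 2 * (Gs + tG) + 4 * Q * tG * gn ^ 2 * (Gs + tG)
        - 2 * |gn ^ 2 - N ^ 2 - Q ^ 2| * N * gn * Gs) / (2 * tG * Gs ^ 2 * (Gs + tG)) := by
    field_simp
    ring
  rw [heq]
  exact div_nonneg (by linarith [key]) (by positivity)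

/-- Young-type inequality for the final bound. -/
lemma aux_young (η σ1 β M r X : ℝ) (hη : 0 < η) (hσ1 : 0 ≤ σ1) (hβ : 0 ≤ β)
    (hM0 : 0 ≤ M) (hX0 : 0 ≤ X) (hr0 : 0 ≤ r) (hr2 : r ^ 2 = 2 * β * M) :
    2 * η * σ1 * (r * X) ≤ M / 4 + 8 * η ^ 2 * β * σ1 ^ 2 * X ^ 2 := by
  rcases eq_or_lt_of_le hβ with hβ0 | hβpos
  · have hrz : r = 0 := by
      have : r ^ 2 = 0 := by rw [hr2, ← hβ0]; ring
      nlinarith [hr0]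
    rw [hrz]
    have : (0:ℝ) ≤ 8 * η ^ 2 * β * σ1 ^ 2 * X ^ 2 := by positivity
    simp only [mul_zero, zero_mul]
    linarith
  · have h8 : 16 * η * β * σ1 * (r * X) ≤ 2 * β * M + 64 * η ^ 2 * β ^ 2 * σ1 ^ 2 * X ^ 2 := by
      nlinarith [sq_nonneg (r - 8 * η * β * σ1 * X), hr2]
    nlinarith [h8, hβpos]


end Aux

set_option maxHeartbeats 2000000 in
theorem decorrelated_difference_sum (d : ℕ) (η γ β σ0 σ1 fstar : ℝ)
    (hη : 0 < η) (hγ : 0 < γ) (hβ : 0 ≤ β) (hσ0 : 0 ≤ σ0) (hσ1 : 0 ≤ σ1)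
    (f : EuclideanSpace ℝ (Fin d) → ℝ)
    (hdiff : ∀ x, DifferentiableAt ℝ f x)
    (hsmooth : ∀ x y, ‖gradient f x - gradient f y‖ ≤ β * ‖x - y‖)
    (hmin : ∀ x, fstar ≤ f x) (hatt : ∃ x, f x = fstar)
    (w g : ℕ → EuclideanSpace ℝ (Fin d))
    (G ηs tηs : ℕ → ℝ)
    (hG : ∀ s, G s = Real.sqrt (γ ^ 2 + ∑ k ∈ Icc 1 s, ‖g k‖ ^ 2))
    (hηs : ∀ s, ηs s = η / G s)
    (htηs : ∀ s, 1 ≤ s → tηs s =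
      η / Real.sqrt (G (s - 1) ^ 2 + (1 + σ1 ^ 2) * ‖gradient f (w s)‖ ^ 2 + σ0 ^ 2))
    (hnoise : ∀ s, ‖g s - gradient f (w s)‖ ^ 2 ≤ σ0 ^ 2 + σ1 ^ 2 * ‖gradient f (w s)‖ ^ 2)
    (hw : ∀ s, 1 ≤ s → w (s + 1) = w s - ηs s • g s) :
    ∀ t, (ht : 1 ≤ t) →
      ∑ s ∈ Icc 1 t, |tηs s - ηs s| * (inner ℝ (gradient f (w s)) (g s) : ℝ) ≤
        ((Icc 1 t).sup' (Finset.nonempty_Icc.mpr ht) fun s => f (w s) - fstar) / 4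
          + (1 / 2) * ∑ s ∈ Icc 1 t, tηs s * ‖gradient f (w s)‖ ^ 2
          + 2 * η * σ0 * ∑ s ∈ Icc 1 t, ‖g s‖ ^ 2 / G s ^ 2
          + 8 * η ^ 2 * β * σ1 ^ 2 * (∑ s ∈ Icc 1 t, ‖g s‖ ^ 2 / G s ^ 2) ^ 2 := by
  intro t ht
  -- basic facts about G
  have hGpos : ∀ m, 0 < G m := by
    intro m
    rw [hG m]
    apply Real.sqrt_pos.mpr
    have : (0:ℝ) ≤ ∑ k ∈ Icc 1 m, ‖g k‖ ^ 2 :=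
      Finset.sum_nonneg fun i _ => sq_nonneg _
    nlinarith [sq_nonneg γ, hγ]
  have hGsq : ∀ m, G m ^ 2 = γ ^ 2 + ∑ k ∈ Icc 1 m, ‖g k‖ ^ 2 := by
    intro m
    rw [hG m]
    apply Real.sq_sqrt
    have : (0:ℝ) ≤ ∑ k ∈ Icc 1 m, ‖g k‖ ^ 2 :=
      Finset.sum_nonneg fun i _ => sq_nonneg _
    nlinarith [sq_nonneg γ]
  have hGstep : ∀ n : ℕ, G (n + 1) ^ 2 = G n ^ 2 + ‖g (n + 1)‖ ^ 2 := by
    intro n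
    rw [hGsq, hGsq, Finset.sum_Icc_succ_top (Nat.le_add_left 1 n)]
    ring
  set M : ℝ := (Icc 1 t).sup' (Finset.nonempty_Icc.mpr ht) fun s => f (w s) - fstar with hM
  have h1mem : (1 : ℕ) ∈ Icc 1 t := Finset.mem_Icc.mpr ⟨le_refl 1, ht⟩
  have hM0 : 0 ≤ M := by
    have h1 : f (w 1) - fstar ≤ M := Finset.le_sup' (fun s => f (w s) - fstar) h1mem
    have h2 : 0 ≤ f (w 1) - fstar := sub_nonneg.mpr (hmin _)
    linarith
  set r : ℝ := Real.sqrt (2 * β * M) with hr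
  have hr0 : 0 ≤ r := Real.sqrt_nonneg _
  have hr2 : r ^ 2 = 2 * β * M := Real.sq_sqrt (by positivity)
  -- gradient norm bound
  have hNr : ∀ s ∈ Icc 1 t, ‖gradient f (w s)‖ ≤ r := by
    intro s hs
    have hpl := aux_pl f β fstar hβ hdiff hsmooth hmin hatt (w s)
    have hsM : f (w s) - fstar ≤ M := Finset.le_sup' (fun s => f (w s) - fstar) hs
    have h2 : ‖gradient f (w s)‖ ^ 2 ≤ 2 * β * M := by nlinarith
    calc ‖gradient f (w s)‖ = Real.sqrt (‖gradient f (w s)‖ ^ 2) :=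
          (Real.sqrt_sq (norm_nonneg _)).symm
      _ ≤ Real.sqrt (2 * β * M) := Real.sqrt_le_sqrt h2
      _ = r := rfl
  -- per-step inequality
  have hstep : ∀ s ∈ Icc 1 t,
      |tηs s - ηs s| * (inner ℝ (gradient f (w s)) (g s) : ℝ) ≤
        (1 / 2) * (tηs s * ‖gradient f (w s)‖ ^ 2)
          + 2 * η * σ0 * (‖g s‖ ^ 2 / G s ^ 2)
          + 2 * η * σ1 * (‖gradient f (w s)‖ * (‖g s‖ ^ 2 / G s ^ 2)) := by
    intro s hs
    obtain ⟨hs1, hst⟩ := Finset.mem_Icc.mp hs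
    obtain ⟨n, rfl⟩ : ∃ n, s = n + 1 := ⟨s - 1, (Nat.succ_pred_eq_of_pos hs1).symm⟩
    set s := n + 1
    have hsub : s - 1 = n := rfl
    set N : ℝ := ‖gradient f (w s)‖ with hN
    set gn : ℝ := ‖g s‖ with hgn
    have hN0 : 0 ≤ N := norm_nonneg _
    have hg0 : 0 ≤ gn := norm_nonneg _
    set Q : ℝ := Real.sqrt (σ0 ^ 2 + σ1 ^ 2 * N ^ 2) with hQ
    have hQ0 : 0 ≤ Q := Real.sqrt_nonneg _
    have hQ2 : Q ^ 2 = σ0 ^ 2 + σ1 ^ 2 * N ^ 2 := Real.sq_sqrt (by positivity)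
    set D : ℝ := G (s - 1) ^ 2 + (1 + σ1 ^ 2) * N ^ 2 + σ0 ^ 2 with hD
    have hDpos : 0 < D := by
      have := hGpos (s - 1)
      nlinarith [sq_nonneg N, sq_nonneg σ0, sq_nonneg σ1, sq_nonneg (σ1 * N)]
    set tG : ℝ := Real.sqrt D with htG
    have htGpos : 0 < tG := Real.sqrt_pos.mpr hDpos
    have htG2 : tG ^ 2 = D := Real.sq_sqrt hDpos.le
    have htηseq : tηs s = η / tG := htηs s hs1
    have hGs := hGpos s
    -- relation between the squares
    have hnum : G s ^ 2 - tG ^ 2 = gn ^ 2 - N ^ 2 - Q ^ 2 := by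
      rw [htG2, hD, hsub, hGstep n, hQ2]
      ring
    -- noise consequences
    have heQ : ‖g s - gradient f (w s)‖ ≤ Q := by
      have h1 := hnoise s
      calc ‖g s - gradient f (w s)‖
          = Real.sqrt (‖g s - gradient f (w s)‖ ^ 2) := (Real.sqrt_sq (norm_nonneg _)).symm
        _ ≤ Real.sqrt (σ0 ^ 2 + σ1 ^ 2 * N ^ 2) := Real.sqrt_le_sqrt (by rw [hN]; exact h1)
        _ = Q := rfl
    have hgNQ : gn ≤ N + Q := by
      have h1 := norm_sub_norm_le (g s) (gradient f (w s))
      have h2 : gn - N ≤ ‖g s - gradient f (w s)‖ := h1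
      linarith [heQ]
    have hNgQ : N ≤ gn + Q := by
      have h1 := norm_sub_norm_le (gradient f (w s)) (g s)
      rw [norm_sub_rev] at h1
      have h2 : N - gn ≤ ‖g s - gradient f (w s)‖ := h1
      linarith [heQ]
    -- gn ≤ G s
    have hgG : gn ≤ G s := by
      have h1 : gn ^ 2 ≤ G s ^ 2 := by
        rw [hGstep n]
        nlinarith [hGpos n]
      calc gn = Real.sqrt (gn ^ 2) := (Real.sqrt_sq hg0).symm
        _ ≤ Real.sqrt (G s ^ 2) := Real.sqrt_le_sqrt h1
        _ = G s := Real.sqrt_sq hGs.le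
    -- N ≤ tG, Q ≤ tG
    have hNtG : N ≤ tG := by
      have h1 : N ^ 2 ≤ tG ^ 2 := by
        rw [htG2, hD]
        nlinarith [sq_nonneg (G (s-1)), sq_nonneg σ0, sq_nonneg (σ1 * N)]
      calc N = Real.sqrt (N ^ 2) := (Real.sqrt_sq hN0).symm
        _ ≤ Real.sqrt (tG ^ 2) := Real.sqrt_le_sqrt h1
        _ = tG := Real.sqrt_sq htGpos.le
    have hQtG : Q ≤ tG := by
      have h1 : Q ^ 2 ≤ tG ^ 2 := by
        rw [htG2, hD, hQ2]
        nlinarith [sq_nonneg (G (s-1)), sq_nonneg N]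
      calc Q = Real.sqrt (Q ^ 2) := (Real.sqrt_sq hQ0).symm
        _ ≤ Real.sqrt (tG ^ 2) := Real.sqrt_le_sqrt h1
        _ = tG := Real.sqrt_sq htGpos.le
    -- difference of step sizes
    have hdiffeq : tηs s - ηs s = η * (gn ^ 2 - N ^ 2 - Q ^ 2) / (tG * G s * (G s + tG)) := by
      rw [htηseq, hηs s, ← hnum]
      field_simp
      ring
    have hdenpos : 0 < tG * G s * (G s + tG) :=
      mul_pos (mul_pos htGpos hGs) (by linarith)
    have habseq : |tηs s - ηs s| =
        η * |gn ^ 2 - N ^ 2 - Q ^ 2| / (tG * G s * (G s + tG)) := by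
      rw [hdiffeq, abs_div, abs_mul, abs_of_pos hη, abs_of_pos hdenpos]
    have hmain := aux_step N gn Q (G s) tG hN0 hg0 hQ0 hGs htGpos hgG hNtG hQtG hgNQ hNgQ
    -- chain together
    have hQle : Q ≤ σ0 + σ1 * N := by
      have hsq : Q ^ 2 ≤ (σ0 + σ1 * N) ^ 2 := by
        rw [hQ2]
        nlinarith [mul_nonneg hσ0 (mul_nonneg hσ1 hN0)]
      calc Q = Real.sqrt (Q ^ 2) := (Real.sqrt_sq hQ0).symm
        _ ≤ Real.sqrt ((σ0 + σ1 * N) ^ 2) := Real.sqrt_le_sqrt hsq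
        _ = σ0 + σ1 * N := Real.sqrt_sq (by positivity)
    calc |tηs s - ηs s| * (inner ℝ (gradient f (w s)) (g s) : ℝ)
        ≤ |tηs s - ηs s| * (N * gn) := by
          apply mul_le_mul_of_nonneg_left _ (abs_nonneg _)
          exact real_inner_le_norm _ _
      _ = η * (|gn ^ 2 - N ^ 2 - Q ^ 2| * N * gn / (tG * G s * (G s + tG))) := by
          rw [habseq]; ring
      _ ≤ η * (N ^ 2 / (2 * tG) + 2 * Q * (gn ^ 2 / G s ^ 2)) :=
          mul_le_mul_of_nonneg_left hmain hη.le
      _ ≤ (1 / 2) * (tηs s * N ^ 2) + 2 * η * σ0 * (gn ^ 2 / G s ^ 2)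
            + 2 * η * σ1 * (N * (gn ^ 2 / G s ^ 2)) := by
          rw [htηseq]
          have hx0 : (0:ℝ) ≤ gn ^ 2 / G s ^ 2 := by positivity
          have h1 : η * (2 * Q * (gn ^ 2 / G s ^ 2)) ≤
              η * (2 * (σ0 + σ1 * N) * (gn ^ 2 / G s ^ 2)) := by
            apply mul_le_mul_of_nonneg_left _ hη.le
            apply mul_le_mul_of_nonneg_right _ hx0
            linarith
          have h2 : η * (N ^ 2 / (2 * tG)) = (1 / 2) * (η / tG * N ^ 2) := by
            field_simp
          linarith [h1, h2]
  -- sum up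
  set X : ℝ := ∑ s ∈ Icc 1 t, ‖g s‖ ^ 2 / G s ^ 2 with hX
  have hX0 : 0 ≤ X := Finset.sum_nonneg fun s _ => by positivity
  have hsum1 : ∑ s ∈ Icc 1 t, |tηs s - ηs s| * (inner ℝ (gradient f (w s)) (g s) : ℝ) ≤
      ∑ s ∈ Icc 1 t, ((1 / 2) * (tηs s * ‖gradient f (w s)‖ ^ 2)
          + 2 * η * σ0 * (‖g s‖ ^ 2 / G s ^ 2)
          + 2 * η * σ1 * (‖gradient f (w s)‖ * (‖g s‖ ^ 2 / G s ^ 2))) :=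
    Finset.sum_le_sum hstep
  have hsum2 : ∑ s ∈ Icc 1 t, ((1 / 2) * (tηs s * ‖gradient f (w s)‖ ^ 2)
          + 2 * η * σ0 * (‖g s‖ ^ 2 / G s ^ 2)
          + 2 * η * σ1 * (‖gradient f (w s)‖ * (‖g s‖ ^ 2 / G s ^ 2))) =
      (1 / 2) * ∑ s ∈ Icc 1 t, tηs s * ‖gradient f (w s)‖ ^ 2
        + 2 * η * σ0 * X
        + 2 * η * σ1 * ∑ s ∈ Icc 1 t, ‖gradient f (w s)‖ * (‖g s‖ ^ 2 / G s ^ 2) := by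
    rw [Finset.sum_add_distrib, Finset.sum_add_distrib, ← Finset.mul_sum, ← Finset.mul_sum,
      ← Finset.mul_sum]
  have hsum3 : ∑ s ∈ Icc 1 t, ‖gradient f (w s)‖ * (‖g s‖ ^ 2 / G s ^ 2) ≤ r * X := by
    rw [hX, Finset.mul_sum]
    apply Finset.sum_le_sum
    intro s hs
    exact mul_le_mul_of_nonneg_right (hNr s hs) (by positivity)
  have hYoung : 2 * η * σ1 * (r * X) ≤ M / 4 + 8 * η ^ 2 * β * σ1 ^ 2 * X ^ 2 :=
    aux_young η σ1 β M r X hη hσ1 hβ hM0 hX0 hr0 hr2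
  have hlast : 2 * η * σ1 * ∑ s ∈ Icc 1 t, ‖gradient f (w s)‖ * (‖g s‖ ^ 2 / G s ^ 2) ≤
      M / 4 + 8 * η ^ 2 * β * σ1 ^ 2 * X ^ 2 := by
    have h1 : 2 * η * σ1 * ∑ s ∈ Icc 1 t, ‖gradient f (w s)‖ * (‖g s‖ ^ 2 / G s ^ 2) ≤
        2 * η * σ1 * (r * X) := by
      apply mul_le_mul_of_nonneg_left hsum3 (by positivity)
    linarith [hYoung]
  calc ∑ s ∈ Icc 1 t, |tηs s - ηs s| * (inner ℝ (gradient f (w s)) (g s) : ℝ)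
      ≤ (1 / 2) * ∑ s ∈ Icc 1 t, tηs s * ‖gradient f (w s)‖ ^ 2
          + 2 * η * σ0 * X
          + 2 * η * σ1 * ∑ s ∈ Icc 1 t, ‖gradient f (w s)‖ * (‖g s‖ ^ 2 / G s ^ 2) := by
        rw [← hsum2]; exact hsum1
    _ ≤ (1 / 2) * ∑ s ∈ Icc 1 t, tηs s * ‖gradient f (w s)‖ ^ 2
          + 2 * η * σ0 * X + (M / 4 + 8 * η ^ 2 * β * σ1 ^ 2 * X ^ 2) := by
        linarith [hlast]
    _ = M / 4 + (1 / 2) * ∑ s ∈ Icc 1 t, tηs s * ‖gradient f (w s)‖ ^ 2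
          + 2 * η * σ0 * X + 8 * η ^ 2 * β * σ1 ^ 2 * X ^ 2 := by ring
end

section
/- Let f be beta-smooth with minimum f_star, let w_{t+1} = w_t - eta_t g_t with AdaGrad stepsizes eta_t = eta/G_t, and suppose ||g_t - ∇f(w_t)||^2 <= sigma_0^2 + sigma_1^2 ||∇f(w_t)||^2 for all t. Then sum_{t=1}^T ||g_t||^2 / G_t^2 <= log(1 + (2 sigma_0^2 T + 8(1+sigma_1^2)(eta^2 beta^2 T^3 + beta (f(w_1)-f_star) T)) / gamma^2). -/
set_option linter.unusedVariables false
set_option linter.deprecated false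

open Finset

local notation "⟪" x ", " y "⟫" => @inner ℝ _ _ x y

lemma descent_lemma {d : ℕ} {β : ℝ} (hβ : 0 ≤ β) (f : EuclideanSpace ℝ (Fin d) → ℝ)
    (hdiff : ∀ x, DifferentiableAt ℝ f x)
    (hsmooth : ∀ x y, ‖gradient f x - gradient f y‖ ≤ β * ‖x - y‖)
    (x y : EuclideanSpace ℝ (Fin d)) :
    f y ≤ f x + ⟪gradient f x, y - x⟫ + β / 2 * ‖y - x‖ ^ 2 := by
  set v := y - x with hv
  set φ : ℝ → ℝ := fun t => f (x + t • v) - t * ⟪gradient f x, v⟫ - β / 2 * t ^ 2 * ‖v‖ ^ 2 with hφ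
  have key : ∀ t : ℝ, HasDerivAt φ
      (⟪gradient f (x + t • v), v⟫ - ⟪gradient f x, v⟫ - β / 2 * (2 * t) * ‖v‖ ^ 2) t := by
    intro t
    have hc : HasDerivAt (fun t : ℝ => x + t • v) v t := by
      simpa using ((hasDerivAt_id t).smul_const v).const_add x
    have h1 : HasDerivAt (fun t : ℝ => f (x + t • v)) (⟪gradient f (x + t • v), v⟫ : ℝ) t := by
      have := ((hdiff (x + t • v)).hasGradientAt.hasFDerivAt).comp_hasDerivAt t hc
      simpa [Function.comp_def, InnerProductSpace.toDual_apply_apply] using this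
    have h2 : HasDerivAt (fun t : ℝ => t * ⟪gradient f x, v⟫) (⟪gradient f x, v⟫ : ℝ) t := by
      simpa using (hasDerivAt_id t).mul_const (⟪gradient f x, v⟫ : ℝ)
    have h3 : HasDerivAt (fun t : ℝ => β / 2 * t ^ 2 * ‖v‖ ^ 2)
        (β / 2 * (2 * t) * ‖v‖ ^ 2) t := by
      have := ((hasDerivAt_pow 2 t).const_mul (β / 2)).mul_const (‖v‖ ^ 2)
      exact this.congr_deriv (by norm_num)
    exact (h1.sub h2).sub h3
  have anti : AntitoneOn φ (Set.Icc (0:ℝ) 1) := by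
    apply antitoneOn_of_deriv_nonpos (convex_Icc 0 1)
    · exact fun t _ => (key t).continuousAt.continuousWithinAt
    · exact fun t _ => (key t).differentiableAt.differentiableWithinAt
    · intro t ht
      rw [interior_Icc] at ht
      rw [(key t).deriv]
      have h1 : ⟪gradient f (x + t • v) - gradient f x, v⟫ ≤
          ‖gradient f (x + t • v) - gradient f x‖ * ‖v‖ := real_inner_le_norm _ _
      have h2 : ‖gradient f (x + t • v) - gradient f x‖ ≤ β * (t * ‖v‖) := by
        have h := hsmooth (x + t • v) x
        have : ‖(x + t • v) - x‖ = t * ‖v‖ := by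
          simp [norm_smul, abs_of_nonneg ht.1.le]
        rw [this] at h
        exact h
      have h3 : ⟪gradient f (x + t • v), v⟫ - ⟪gradient f x, v⟫ =
          ⟪gradient f (x + t • v) - gradient f x, v⟫ := (inner_sub_left _ _ _).symm
      nlinarith [norm_nonneg v, ht.1.le, norm_nonneg (gradient f (x + t • v) - gradient f x)]
  have h01 := anti (Set.left_mem_Icc.2 zero_le_one) (Set.right_mem_Icc.2 zero_le_one) zero_le_one
  simp only [hφ, one_smul, zero_smul, add_zero, one_pow, mul_one, zero_pow, mul_zero,
    zero_mul, sub_zero, one_mul] at h01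
  have hxy : x + v = y := by rw [hv]; abel
  rw [hxy] at h01
  linarith

lemma grad_sq_le_descent {d : ℕ} {β fstar : ℝ} (hβ : 0 ≤ β)
    (f : EuclideanSpace ℝ (Fin d) → ℝ)
    (hdiff : ∀ x, DifferentiableAt ℝ f x)
    (hsmooth : ∀ x y, ‖gradient f x - gradient f y‖ ≤ β * ‖x - y‖)
    (hmin : ∀ x, fstar ≤ f x)
    (x : EuclideanSpace ℝ (Fin d)) :
    ‖gradient f x‖ ^ 2 ≤ 2 * β * (f x - fstar) := by
  have hkey : ∀ c : ℝ, fstar ≤ f x - c * ‖gradient f x‖ ^ 2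
      + β / 2 * c ^ 2 * ‖gradient f x‖ ^ 2 := by
    intro c
    have hd := descent_lemma hβ f hdiff hsmooth x (x - c • gradient f x)
    have h1 : (x - c • gradient f x) - x = -(c • gradient f x) := by abel
    have h2 : (⟪gradient f x, (x - c • gradient f x) - x⟫ : ℝ) = -(c * ‖gradient f x‖ ^ 2) := by
      rw [h1, inner_neg_right, real_inner_smul_right, real_inner_self_eq_norm_sq]
    have h3 : ‖(x - c • gradient f x) - x‖ ^ 2 = c ^ 2 * ‖gradient f x‖ ^ 2 := by
      rw [h1, norm_neg, norm_smul, mul_pow, Real.norm_eq_abs, sq_abs]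
    rw [h2, h3] at hd
    have := hmin (x - c • gradient f x)
    linarith
  rcases eq_or_lt_of_le hβ with hb0 | hb0
  · have hN : ‖gradient f x‖ ^ 2 ≤ 0 := by
      by_contra hcon
      push_neg at hcon
      have := hkey ((f x - fstar + 1) / ‖gradient f x‖ ^ 2)
      rw [← hb0] at this
      rw [div_mul_cancel₀ _ (ne_of_gt hcon)] at this
      simp at this
      linarith
    have := sq_nonneg ‖gradient f x‖
    have hfx := hmin x
    nlinarith
  · have h := hkey (1 / β)
    have hβc : β / 2 * (1 / β) ^ 2 = 1 / (2 * β) := by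
      field_simp
    rw [hβc] at h
    have hN := sq_nonneg ‖gradient f x‖
    have h2 : ‖gradient f x‖ ^ 2 / (2 * β) ≤ f x - fstar := by
      have : (1/β) * ‖gradient f x‖^2 - 1/(2*β) * ‖gradient f x‖^2 = ‖gradient f x‖^2/(2*β) := by
        field_simp
        ring
      linarith
    rw [div_le_iff₀ (by positivity)] at h2
    linarith

set_option maxHeartbeats 1000000 in
theorem adagrad_log_sum_bound (d T : ℕ) (η γ β σ0 σ1 fstar : ℝ)
    (hη : 0 < η) (hγ : 0 < γ) (hβ : 0 ≤ β) (hσ0 : 0 ≤ σ0) (hσ1 : 0 ≤ σ1)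
    (f : EuclideanSpace ℝ (Fin d) → ℝ)
    (hdiff : ∀ x, DifferentiableAt ℝ f x)
    (hsmooth : ∀ x y, ‖gradient f x - gradient f y‖ ≤ β * ‖x - y‖)
    (hmin : ∀ x, fstar ≤ f x) (hatt : ∃ x, f x = fstar)
    (w g : ℕ → EuclideanSpace ℝ (Fin d))
    (G ηt : ℕ → ℝ)
    (hG : ∀ t, G t = Real.sqrt (γ ^ 2 + ∑ s ∈ Icc 1 t, ‖g s‖ ^ 2))
    (hηt : ∀ t, ηt t = η / G t)
    (hnoise : ∀ t, ‖g t - gradient f (w t)‖ ^ 2 ≤ σ0 ^ 2 + σ1 ^ 2 * ‖gradient f (w t)‖ ^ 2)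
    (hw : ∀ t, 1 ≤ t → w (t + 1) = w t - ηt t • g t) :
    ∑ t ∈ Icc 1 T, ‖g t‖ ^ 2 / G t ^ 2 ≤
      Real.logb 2 (1 + (2 * σ0 ^ 2 * T
        + 8 * (1 + σ1 ^ 2) * (η ^ 2 * β ^ 2 * T ^ 3 + β * (f (w 1) - fstar) * T)) / γ ^ 2) := by
  -- basics about G
  have hsum_nonneg : ∀ t, (0:ℝ) ≤ ∑ s ∈ Icc 1 t, ‖g s‖ ^ 2 :=
    fun t => Finset.sum_nonneg fun s _ => sq_nonneg _
  have harg : ∀ t, (0:ℝ) < γ ^ 2 + ∑ s ∈ Icc 1 t, ‖g s‖ ^ 2 :=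
    fun t => add_pos_of_pos_of_nonneg (by positivity) (hsum_nonneg t)
  have hGsq : ∀ t, G t ^ 2 = γ ^ 2 + ∑ s ∈ Icc 1 t, ‖g s‖ ^ 2 :=
    fun t => by rw [hG t, Real.sq_sqrt (harg t).le]
  have hGpos : ∀ t, 0 < G t := fun t => by rw [hG t]; exact Real.sqrt_pos.2 (harg t)
  -- step size times gradient bound
  have hηg : ∀ t, 1 ≤ t → ηt t * ‖g t‖ ≤ η := by
    intro t ht
    have hmem : t ∈ Icc 1 t := Finset.mem_Icc.2 ⟨ht, le_refl t⟩
    have h1 : ‖g t‖ ^ 2 ≤ G t ^ 2 := by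
      rw [hGsq t]
      have hss : ‖g t‖ ^ 2 ≤ ∑ s ∈ Icc 1 t, ‖g s‖ ^ 2 :=
        Finset.single_le_sum (f := fun s => ‖g s‖ ^ 2) (fun i _ => sq_nonneg ‖g i‖) hmem
      nlinarith [sq_nonneg γ]
    have h2 : ‖g t‖ ≤ G t := by nlinarith [norm_nonneg (g t), hGpos t]
    rw [hηt t]
    rw [div_mul_eq_mul_div, div_le_iff₀ (hGpos t)]
    have := mul_le_mul_of_nonneg_left h2 hη.le
    linarith
  -- gradient growth per step
  have hstep : ∀ t, 1 ≤ t →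
      ‖gradient f (w (t + 1))‖ ≤ ‖gradient f (w t)‖ + η * β := by
    intro t ht
    have h1 := hsmooth (w (t + 1)) (w t)
    have h2 : ‖w (t + 1) - w t‖ = ηt t * ‖g t‖ := by
      rw [hw t ht]
      have : w t - ηt t • g t - w t = -(ηt t • g t) := by abel
      rw [this, norm_neg, norm_smul, Real.norm_eq_abs,
        abs_of_nonneg (by rw [hηt t]; exact div_nonneg hη.le (hGpos t).le)]
    have h3 := norm_sub_norm_le (gradient f (w (t + 1))) (gradient f (w t))
    have h4 := hηg t ht
    have h5 : β * (ηt t * ‖g t‖) ≤ β * η := mul_le_mul_of_nonneg_left h4 hβ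
    rw [h2] at h1
    linarith
  have hgrow : ∀ n : ℕ, ‖gradient f (w (1 + n))‖ ≤ ‖gradient f (w 1)‖ + η * β * n := by
    intro n
    induction n with
    | zero => simp
    | succ n ih =>
      have h := hstep (1 + n) (by omega)
      have heq : 1 + (n + 1) = (1 + n) + 1 := by omega
      rw [heq]
      push_cast
      linarith
  have hΔ : 0 ≤ f (w 1) - fstar := by linarith [hmin (w 1)]
  have hGw1 : ‖gradient f (w 1)‖ ^ 2 ≤ 2 * β * (f (w 1) - fstar) :=
    grad_sq_le_descent hβ f hdiff hsmooth hmin (w 1)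
  -- bound on gradient norms at iterates
  have hgrad_bound : ∀ t ∈ Icc 1 T, ‖gradient f (w t)‖ ^ 2 ≤
      4 * β * (f (w 1) - fstar) + 2 * η ^ 2 * β ^ 2 * (T:ℝ) ^ 2 := by
    intro t ht
    obtain ⟨h1t, htT⟩ := Finset.mem_Icc.1 ht
    obtain ⟨n, rfl⟩ : ∃ n, t = 1 + n := ⟨t - 1, by omega⟩
    have h1 := hgrow n
    have hnT : (n:ℝ) ≤ (T:ℝ) := by exact_mod_cast (by omega : n ≤ T)
    have hn0 : (0:ℝ) ≤ (n:ℝ) := Nat.cast_nonneg n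
    have hN0 : (0:ℝ) ≤ ‖gradient f (w (1 + n))‖ := norm_nonneg _
    have ha : ‖gradient f (w (1 + n))‖ ^ 2 ≤ (‖gradient f (w 1)‖ + η * β * (n:ℝ)) ^ 2 :=
      pow_le_pow_left₀ hN0 h1 2
    have hb : η * β * (n:ℝ) ≤ η * β * (T:ℝ) :=
      mul_le_mul_of_nonneg_left hnT (mul_nonneg hη.le hβ)
    have hc : (η * β * (n:ℝ)) ^ 2 ≤ (η * β * (T:ℝ)) ^ 2 :=
      pow_le_pow_left₀ (by positivity) hb 2
    nlinarith [sq_nonneg (‖gradient f (w 1)‖ - η * β * (n:ℝ)), hGw1, ha, hc]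
  -- bound on ‖g t‖^2
  have hg_bound : ∀ t ∈ Icc 1 T, ‖g t‖ ^ 2 ≤
      2 * σ0 ^ 2 + 2 * (1 + σ1 ^ 2) *
        (4 * β * (f (w 1) - fstar) + 2 * η ^ 2 * β ^ 2 * (T:ℝ) ^ 2) := by
    intro t ht
    have h1 : ‖g t‖ ≤ ‖g t - gradient f (w t)‖ + ‖gradient f (w t)‖ := by
      have := norm_add_le (g t - gradient f (w t)) (gradient f (w t))
      simpa using this
    have h2 := hnoise t
    have h3 := hgrad_bound t ht
    nlinarith [sq_nonneg (‖g t - gradient f (w t)‖ - ‖gradient f (w t)‖),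
      norm_nonneg (g t), norm_nonneg (g t - gradient f (w t)),
      norm_nonneg (gradient f (w t)), sq_nonneg σ1, sq_nonneg (σ1 * ‖gradient f (w t)‖),
      mul_nonneg (sq_nonneg σ1) (sq_nonneg ‖gradient f (w t)‖)]
  -- sum over the g's
  have hsumg : ∑ s ∈ Icc 1 T, ‖g s‖ ^ 2 ≤
      2 * σ0 ^ 2 * T + 8 * (1 + σ1 ^ 2) *
        (η ^ 2 * β ^ 2 * (T:ℝ) ^ 3 + β * (f (w 1) - fstar) * T) := by
    have hcard : (Icc 1 T).card = T := by simp
    have h := Finset.sum_le_card_nsmul (Icc 1 T) (fun s => ‖g s‖ ^ 2) _ hg_bound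
    rw [hcard, nsmul_eq_mul] at h
    have hT0 : (0:ℝ) ≤ (T:ℝ) := Nat.cast_nonneg T
    nlinarith [mul_nonneg (mul_nonneg (mul_nonneg (sq_nonneg η) (sq_nonneg β)) hT0)
        (mul_nonneg hT0 hT0), sq_nonneg σ1, hΔ,
      mul_nonneg (mul_nonneg (sq_nonneg σ1) (mul_nonneg (sq_nonneg η) (sq_nonneg β)))
        (mul_nonneg (mul_nonneg hT0 hT0) hT0)]
  -- telescoping log bound
  have hlog : ∀ n : ℕ, ∑ t ∈ Icc 1 n, ‖g t‖ ^ 2 / G t ^ 2 ≤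
      Real.logb 2 (G n ^ 2 / γ ^ 2) := by
    intro n
    induction n with
    | zero =>
      have he : Icc 1 0 = (∅ : Finset ℕ) := by simp
      rw [he]
      simp [hGsq 0, he, div_self (ne_of_gt (by positivity : (0:ℝ) < γ ^ 2))]
    | succ n ih =>
      rw [Finset.sum_Icc_succ_top (by omega : 1 ≤ n + 1)]
      have hsq : G (n + 1) ^ 2 = G n ^ 2 + ‖g (n + 1)‖ ^ 2 := by
        rw [hGsq, hGsq, Finset.sum_Icc_succ_top (by omega : 1 ≤ n + 1)]
        ring
      have hApos : (0:ℝ) < G n ^ 2 := pow_pos (hGpos n) 2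
      have hBpos : (0:ℝ) < G (n + 1) ^ 2 := pow_pos (hGpos (n+1)) 2
      have hAB : G n ^ 2 ≤ G (n + 1) ^ 2 := by nlinarith [sq_nonneg ‖g (n + 1)‖]
      have key : ‖g (n + 1)‖ ^ 2 / G (n + 1) ^ 2 ≤
          Real.logb 2 (G (n + 1) ^ 2 / G n ^ 2) := by
        have h1 : Real.log (G n ^ 2 / G (n + 1) ^ 2) ≤ G n ^ 2 / G (n + 1) ^ 2 - 1 :=
          Real.log_le_sub_one_of_pos (div_pos hApos hBpos)
        have h2 : Real.log (G (n + 1) ^ 2 / G n ^ 2) = -Real.log (G n ^ 2 / G (n + 1) ^ 2) := by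
          rw [← Real.log_inv]
          congr 1
          field_simp
        have h3 : 0 ≤ Real.log (G (n + 1) ^ 2 / G n ^ 2) :=
          Real.log_nonneg ((one_le_div hApos).2 hAB)
        have h4 : Real.log (G (n + 1) ^ 2 / G n ^ 2) ≤
            Real.logb 2 (G (n + 1) ^ 2 / G n ^ 2) := by
          rw [Real.logb, le_div_iff₀ (Real.log_pos (by norm_num))]
          exact mul_le_of_le_one_right h3
            (Real.log_two_lt_d9.le.trans (by norm_num))
        have h5 : ‖g (n + 1)‖ ^ 2 / G (n + 1) ^ 2 = 1 - G n ^ 2 / G (n + 1) ^ 2 := by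
          have hx : ‖g (n + 1)‖ ^ 2 = G (n + 1) ^ 2 - G n ^ 2 := by linarith
          rw [hx, sub_div, div_self hBpos.ne']
        linarith
      have hsplit : Real.logb 2 (G (n + 1) ^ 2 / γ ^ 2) =
          Real.logb 2 (G n ^ 2 / γ ^ 2) + Real.logb 2 (G (n + 1) ^ 2 / G n ^ 2) := by
        rw [← Real.logb_mul (ne_of_gt (div_pos hApos (by positivity))) (ne_of_gt (div_pos hBpos hApos))]
        congr 1
        field_simp
        rw [mul_div_cancel_right₀ _ (hGpos n).ne']
      rw [hsplit]
      linarith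
  -- final assembly
  have hfin := hlog T
  have hD0 : (0:ℝ) ≤ 2 * σ0 ^ 2 * T + 8 * (1 + σ1 ^ 2) *
      (η ^ 2 * β ^ 2 * (T:ℝ) ^ 3 + β * (f (w 1) - fstar) * T) := by
    have hT0 : (0:ℝ) ≤ (T:ℝ) := Nat.cast_nonneg T
    have h1 : (0:ℝ) ≤ η ^ 2 * β ^ 2 * (T:ℝ) ^ 3 := by positivity
    have h2 : (0:ℝ) ≤ β * (f (w 1) - fstar) * T := mul_nonneg (mul_nonneg hβ hΔ) hT0
    nlinarith [sq_nonneg σ0, sq_nonneg σ1]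
  have hmono : G T ^ 2 / γ ^ 2 ≤ 1 + (2 * σ0 ^ 2 * T + 8 * (1 + σ1 ^ 2) *
      (η ^ 2 * β ^ 2 * (T:ℝ) ^ 3 + β * (f (w 1) - fstar) * T)) / γ ^ 2 := by
    rw [hGsq T]
    rw [div_le_iff₀ (by positivity : (0:ℝ) < γ ^ 2)]
    have hγ2 : (0:ℝ) < γ ^ 2 := by positivity
    field_simp
    nlinarith [hsumg]
  calc ∑ t ∈ Icc 1 T, ‖g t‖ ^ 2 / G t ^ 2 ≤ Real.logb 2 (G T ^ 2 / γ ^ 2) := hfin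
    _ ≤ _ := Real.logb_le_logb_of_le (by norm_num) (div_pos (pow_pos (hGpos T) 2) (by positivity)) hmono
end

section
/- Let f be convex, and let w_{t+1} = w_t - eta_t g_t with AdaGrad stepsizes eta_t = eta/sqrt(gamma^2 + sum_{s<=t}||g_s||^2). Then for any w_star, sum_{t=1}^T g_t · (w_t - w_star) <= (max_{t<=T} ||w_t - w_star||^2 / eta + eta) * sqrt(sum_{t=1}^T ||g_t||^2) + gamma*||w_1 - w_star||^2 / (2*eta). -/
open Finset
set_option maxHeartbeats 1000000

lemma abel_bound (A b : ℕ → ℝ) (M : ℝ) (hb : ∀ t, b t ≤ b (t+1)) :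
    ∀ T, 1 ≤ T → (∀ t, 1 ≤ t → t ≤ T → A t ≤ M) →
    ∑ t ∈ Icc 1 T, (A t - A (t+1)) * b t ≤ M * (b T - b 0) + A 1 * b 0 - A (T+1) * b T := by
  intro T
  induction T with
  | zero => omega
  | succ n ih =>
    intro _ hM
    rcases Nat.eq_zero_or_pos n with h0 | hn
    · subst h0
      simp only [Finset.Icc_self, Finset.sum_singleton]
      have h1 : A 1 ≤ M := hM 1 le_rfl le_rfl
      have h2 := hb 0
      nlinarith [mul_nonneg (sub_nonneg.2 h1) (sub_nonneg.2 h2)]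
    · have hsum : ∑ t ∈ Icc 1 (n+1), (A t - A (t+1)) * b t
        = ∑ t ∈ Icc 1 n, (A t - A (t+1)) * b t + (A (n+1) - A (n+1+1)) * b (n+1) :=
        Finset.sum_Icc_succ_top (by omega) _
      have ihn := ih hn (fun t h1 h2 => hM t h1 (by omega))
      have hA := hM (n+1) (by omega) le_rfl
      have hbn := hb n
      rw [hsum]
      nlinarith [mul_nonneg (sub_nonneg.2 hA) (sub_nonneg.2 hbn)]

lemma sum_le_telescope (c F : ℕ → ℝ) :
    ∀ T, (∀ t, 1 ≤ t → t ≤ T → c t ≤ F t - F (t-1)) →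
    ∑ t ∈ Icc 1 T, c t ≤ F T - F 0 := by
  intro T
  induction T with
  | zero => intro _; simp
  | succ n ih =>
    intro h
    rw [Finset.sum_Icc_succ_top (by omega)]
    have h1 := h (n+1) (by omega) le_rfl
    simp only [Nat.add_sub_cancel] at h1
    have h2 := ih (fun t a b2 => h t a (by omega))
    linarith

theorem convex_regret_bound (d T : ℕ) (hT : 1 ≤ T) (η γ : ℝ) (hη : 0 < η) (hγ : 0 < γ)
    (f : EuclideanSpace ℝ (Fin d) → ℝ) (hconv : ConvexOn ℝ Set.univ f)
    (g w : ℕ → EuclideanSpace ℝ (Fin d)) (wstar : EuclideanSpace ℝ (Fin d))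
    (ηt : ℕ → ℝ)
    (hηt : ∀ t, ηt t = η / Real.sqrt (γ ^ 2 + ∑ s ∈ Icc 1 t, ‖g s‖ ^ 2))
    (hw : ∀ t, 1 ≤ t → w (t + 1) = w t - ηt t • g t) :
    ∑ t ∈ Icc 1 T, (inner ℝ (g t) (w t - wstar) : ℝ) ≤
      (((Icc 1 T).sup' (Finset.nonempty_Icc.mpr hT) fun t => ‖w t - wstar‖ ^ 2) / η + η)
          * Real.sqrt (∑ t ∈ Icc 1 T, ‖g t‖ ^ 2)
        + γ * ‖w 1 - wstar‖ ^ 2 / (2 * η) := by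
  set M := ((Icc 1 T).sup' (Finset.nonempty_Icc.mpr hT) fun t => ‖w t - wstar‖ ^ 2) with hMdef
  set b : ℕ → ℝ := fun t => Real.sqrt (γ ^ 2 + ∑ s ∈ Icc 1 t, ‖g s‖ ^ 2) with hbdef
  set R := Real.sqrt (∑ t ∈ Icc 1 T, ‖g t‖ ^ 2) with hRdef
  have hRnn : 0 ≤ R := Real.sqrt_nonneg _
  have hbpos : ∀ t, 0 < b t := fun t => Real.sqrt_pos.2 (by positivity)
  have hbmono : ∀ t, b t ≤ b (t+1) := by
    intro t
    apply Real.sqrt_le_sqrt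
    rw [Finset.sum_Icc_succ_top (by omega : 1 ≤ t+1)]
    nlinarith [sq_nonneg ‖g (t+1)‖]
  have hb0 : b 0 = γ := by
    show Real.sqrt (γ ^ 2 + ∑ s ∈ Icc 1 0, ‖g s‖ ^ 2) = γ
    rw [Finset.Icc_eq_empty (by omega), Finset.sum_empty, add_zero, Real.sqrt_sq hγ.le]
  -- key per-step identity
  have key : ∀ t, 1 ≤ t → (inner ℝ (g t) (w t - wstar) : ℝ) =
      (‖w t - wstar‖^2 - ‖w (t+1) - wstar‖^2) * b t / (2*η) + η / (2 * b t) * ‖g t‖^2 := by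
    intro t ht
    have hbp := hbpos t
    have hx : w (t+1) - wstar = (w t - wstar) - ηt t • g t := by
      rw [hw t ht]; abel
    have hnorm : ‖w (t+1) - wstar‖^2
        = ‖w t - wstar‖^2 - 2 * (ηt t * inner ℝ (g t) (w t - wstar)) + (ηt t)^2 * ‖g t‖^2 := by
      rw [hx, norm_sub_sq_real, real_inner_smul_right, real_inner_comm, norm_smul]
      rw [mul_pow, Real.norm_eq_abs, sq_abs]
    have hc : ηt t = η / b t := hηt t
    rw [hc] at hnorm
    field_simp at hnorm ⊢
    nlinarith [Real.sq_sqrt (show (0:ℝ) ≤ γ ^ 2 + ∑ s ∈ Icc 1 t, ‖g s‖ ^ 2 by positivity), hnorm]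
  have hsum : ∑ t ∈ Icc 1 T, (inner ℝ (g t) (w t - wstar) : ℝ)
      = (∑ t ∈ Icc 1 T, (‖w t - wstar‖^2 - ‖w (t+1) - wstar‖^2) * b t) / (2*η)
        + ∑ t ∈ Icc 1 T, η / (2 * b t) * ‖g t‖^2 := by
    rw [Finset.sum_div, ← Finset.sum_add_distrib]
    exact Finset.sum_congr rfl fun t ht => key t (Finset.mem_Icc.1 ht).1
  have hMle : ∀ t, 1 ≤ t → t ≤ T → ‖w t - wstar‖^2 ≤ M := fun t h1 h2 =>
    Finset.le_sup' (fun t => ‖w t - wstar‖ ^ 2) (Finset.mem_Icc.2 ⟨h1, h2⟩)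
  have hM0 : 0 ≤ M := le_trans (by positivity) (hMle 1 le_rfl hT)
  have habel := abel_bound (fun t => ‖w t - wstar‖^2) b M hbmono T hT hMle
  have hbT : b T ≤ γ + R := by
    have h1 : γ^2 + ∑ s ∈ Icc 1 T, ‖g s‖^2 ≤ (γ + R)^2 := by
      nlinarith [Real.sq_sqrt (show (0:ℝ) ≤ ∑ t ∈ Icc 1 T, ‖g t‖^2 by positivity)]
    calc b T ≤ Real.sqrt ((γ+R)^2) := Real.sqrt_le_sqrt h1
      _ = γ + R := Real.sqrt_sq (by positivity)
  have hP1 : ∑ t ∈ Icc 1 T, (‖w t - wstar‖^2 - ‖w (t+1) - wstar‖^2) * b t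
      ≤ M * R + γ * ‖w 1 - wstar‖^2 := by
    have h1 : M * b T ≤ M * (γ + R) := mul_le_mul_of_nonneg_left hbT hM0
    have h2 : (0:ℝ) ≤ ‖w (T+1) - wstar‖^2 * b T :=
      mul_nonneg (by positivity) (hbpos T).le
    rw [hb0] at habel
    linarith
  have hP2 : ∑ t ∈ Icc 1 T, η / (2 * b t) * ‖g t‖^2 ≤ η * R := by
    have htel := sum_le_telescope (fun t => η / (2 * b t) * ‖g t‖^2)
      (fun t => η * Real.sqrt (∑ s ∈ Icc 1 t, ‖g s‖^2)) T ?_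
    · rw [Finset.Icc_eq_empty (by omega : ¬ (1:ℕ) ≤ 0), Finset.sum_empty, Real.sqrt_zero,
        mul_zero, sub_zero] at htel
      exact htel
    · intro t h1 _
      obtain ⟨m, rfl⟩ : ∃ m, t = m+1 := ⟨t-1, by omega⟩
      simp only [Nat.add_sub_cancel]
      have hX : (0:ℝ) ≤ ∑ s ∈ Icc 1 m, ‖g s‖^2 := by positivity
      have hY : ∑ s ∈ Icc 1 (m+1), ‖g s‖^2 = (∑ s ∈ Icc 1 m, ‖g s‖^2) + ‖g (m+1)‖^2 :=
        Finset.sum_Icc_succ_top (by omega) _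
      set u := Real.sqrt (∑ s ∈ Icc 1 m, ‖g s‖^2) with hu
      set v := Real.sqrt (∑ s ∈ Icc 1 (m+1), ‖g s‖^2) with hv
      have hu2 : u^2 = ∑ s ∈ Icc 1 m, ‖g s‖^2 := Real.sq_sqrt hX
      have hv2 : v^2 = (∑ s ∈ Icc 1 m, ‖g s‖^2) + ‖g (m+1)‖^2 := by
        rw [hv, Real.sq_sqrt (by positivity), hY]
      have huv : u ≤ v := Real.sqrt_le_sqrt (by rw [hY]; linarith [sq_nonneg ‖g (m+1)‖])
      have hvb : v ≤ b (m+1) := Real.sqrt_le_sqrt (by linarith [sq_nonneg γ])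
      have hbp := hbpos (m+1)
      have hun : 0 ≤ u := Real.sqrt_nonneg _
      rw [div_mul_eq_mul_div, div_le_iff₀ (by positivity)]
      nlinarith [mul_nonneg (mul_nonneg hη.le (sub_nonneg.2 huv))
        (show (0:ℝ) ≤ 2 * b (m+1) - v - u by linarith)]
  rw [hsum]
  have e1 : (∑ t ∈ Icc 1 T, (‖w t - wstar‖^2 - ‖w (t+1) - wstar‖^2) * b t) / (2*η)
      ≤ (M * R + γ * ‖w 1 - wstar‖^2) / (2*η) := by
    apply div_le_div_of_nonneg_right hP1 ?_ <;> linarith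
  have e2 : (M * R + γ * ‖w 1 - wstar‖^2) / (2*η)
      = M * R / (2*η) + γ * ‖w 1 - wstar‖^2 / (2*η) := add_div _ _ _
  have e3 : M * R / (2*η) ≤ M / η * R := by
    rw [div_mul_eq_mul_div]
    exact div_le_div_of_nonneg_left (mul_nonneg hM0 hRnn) hη (by linarith)
  have e4 : (M / η + η) * R = M / η * R + η * R := by ring
  linarith
end

section
/- Under the setting of the previous statement, sum_{s=1}^t (eta_s - hat_eta_s)(∇f(w_s) - g_s)·(w_s - w_star) <= (max_{s<=t}||w_s - w_star|| / eta) * sum_{s=1}^t eta_{s-1}^2 ||∇f(w_s) - g_s||^2, where eta_{s-1} = eta/G_{s-1}. -/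
open Finset

lemma term_bound_aux (η A a b nD I N M : ℝ) (hη : 0 < η) (hA : 0 < A)
    (ha : 0 ≤ a) (hb : 0 ≤ b) (hnD : 0 ≤ nD) (hN : 0 ≤ N) (hNM : N ≤ M)
    (hba : |b - a| ≤ nD) (hI : |I| ≤ nD * N) :
    (η / Real.sqrt (A ^ 2 + a ^ 2) - η / Real.sqrt (A ^ 2 + b ^ 2)) * I ≤
      (M / η) * ((η / A) ^ 2 * nD ^ 2) := by
  set sa := Real.sqrt (A ^ 2 + a ^ 2) with hsad
  set sb := Real.sqrt (A ^ 2 + b ^ 2) with hsbd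
  have hsa : 0 < sa := Real.sqrt_pos.mpr (by positivity)
  have hsb : 0 < sb := Real.sqrt_pos.mpr (by positivity)
  have hsa2 : sa ^ 2 = A ^ 2 + a ^ 2 := Real.sq_sqrt (by positivity)
  have hsb2 : sb ^ 2 = A ^ 2 + b ^ 2 := Real.sq_sqrt (by positivity)
  have hAsa : A ≤ sa := by nlinarith [sq_nonneg (sa - A)]
  have hAsb : A ≤ sb := by nlinarith [sq_nonneg (sb - A)]
  have hasa : a ≤ sa := by nlinarith [sq_nonneg (sa - a)]
  have hbsb : b ≤ sb := by nlinarith [sq_nonneg (sb - b)]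
  have hM : 0 ≤ M := hN.trans hNM
  -- |sb - sa| ≤ |b - a|
  have h2 : |sb - sa| ≤ |b - a| := by
    have hba1 : -(|b - a|) ≤ b - a := neg_abs_le _
    have hba2 : b - a ≤ |b - a| := le_abs_self _
    have hab0 : 0 ≤ |b - a| := abs_nonneg _
    rw [abs_le]
    constructor <;> nlinarith [mul_pos hsa hsb]
  have h3 : η / sa - η / sb = η * (sb - sa) / (sa * sb) := by
    field_simp
  have h4 : |η / sa - η / sb| ≤ η * nD / A ^ 2 := by
    rw [h3, abs_div, abs_mul, abs_of_pos hη, abs_of_pos (mul_pos hsa hsb)]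
    have h5 : η * |sb - sa| ≤ η * nD := by
      apply mul_le_mul_of_nonneg_left (h2.trans hba) hη.le
    have h6 : A ^ 2 ≤ sa * sb := by nlinarith
    calc η * |sb - sa| / (sa * sb) ≤ η * nD / (sa * sb) := by
          gcongr
      _ ≤ η * nD / A ^ 2 := by
          gcongr
  calc (η / sa - η / sb) * I ≤ |(η / sa - η / sb) * I| := le_abs_self _
    _ = |η / sa - η / sb| * |I| := abs_mul _ _
    _ ≤ (η * nD / A ^ 2) * (nD * N) := by
        apply mul_le_mul h4 hI (abs_nonneg _) (by positivity)
    _ ≤ (η * nD / A ^ 2) * (nD * M) := by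
        apply mul_le_mul_of_nonneg_left (mul_le_mul_of_nonneg_left hNM hnD) (by positivity)
    _ = (M / η) * ((η / A) ^ 2 * nD ^ 2) := by field_simp

theorem hat_stepsize_diff_sum (d : ℕ) (η γ : ℝ) (hη : 0 < η) (hγ : 0 < γ)
    (f : EuclideanSpace ℝ (Fin d) → ℝ) (w g : ℕ → EuclideanSpace ℝ (Fin d))
    (wstar : EuclideanSpace ℝ (Fin d))
    (G ηs hηs : ℕ → ℝ)
    (hG : ∀ s, G s = Real.sqrt (γ ^ 2 + ∑ k ∈ Icc 1 s, ‖g k‖ ^ 2))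
    (hηs' : ∀ s, ηs s = η / Real.sqrt (G (s - 1) ^ 2 + ‖g s‖ ^ 2))
    (hhηs : ∀ s, hηs s = η / Real.sqrt (G (s - 1) ^ 2 + ‖gradient f (w s)‖ ^ 2)) :
    ∀ t, (ht : 1 ≤ t) →
      ∑ s ∈ Icc 1 t, (ηs s - hηs s) * (inner ℝ (gradient f (w s) - g s) (w s - wstar) : ℝ) ≤
        (((Icc 1 t).sup' (Finset.nonempty_Icc.mpr ht) fun s => ‖w s - wstar‖) / η)
          * ∑ s ∈ Icc 1 t, (η / G (s - 1)) ^ 2 * ‖gradient f (w s) - g s‖ ^ 2 := by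
  intro t ht
  set M := (Icc 1 t).sup' (Finset.nonempty_Icc.mpr ht) fun s => ‖w s - wstar‖ with hMdef
  rw [Finset.mul_sum]
  apply Finset.sum_le_sum
  intro s hs
  have hGA : 0 < G (s - 1) := by
    rw [hG]
    apply Real.sqrt_pos.mpr
    have : 0 ≤ ∑ k ∈ Icc 1 (s - 1), ‖g k‖ ^ 2 :=
      Finset.sum_nonneg fun k _ => by positivity
    positivity
  have hNM : ‖w s - wstar‖ ≤ M := Finset.le_sup' (fun s => ‖w s - wstar‖) hs
  rw [hηs', hhηs]
  exact term_bound_aux η (G (s - 1)) (‖g s‖) (‖gradient f (w s)‖)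
    (‖gradient f (w s) - g s‖)
    (inner ℝ (gradient f (w s) - g s) (w s - wstar)) (‖w s - wstar‖) M
    hη hGA (norm_nonneg _) (norm_nonneg _) (norm_nonneg _) (norm_nonneg _) hNM
    (abs_norm_sub_norm_le _ _) (abs_real_inner_le_norm _ _)
end

section
/- Let X be a zero-mean random vector in R^d satisfying the sub-Gaussian tail bound P(||X|| >= t) <= 2 exp(-t^2/sigma^2) for all t > 0 and some sigma > 0. Then for any delta in (0,1) there exists a random vector X_bar (on a possibly enlarged probability space) such that: (i) E[X_bar] = 0; (ii) P(X_bar = X) >= 1 - delta; (iii) P(||X_bar|| < 3 sigma sqrt(ln(4/delta))) = 1. -/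
open MeasureTheory Set
open scoped ENNReal

lemma gauss_tail_aux {σ R : ℝ} (hσ : 0 < σ) (hR : 0 < R) :
    IntegrableOn (fun t => Real.exp (-t ^ 2 / σ ^ 2)) (Set.Ioi R) ∧
    ∫ t in Set.Ioi R, Real.exp (-t ^ 2 / σ ^ 2)
      ≤ σ ^ 2 / (2 * R) * Real.exp (-R ^ 2 / σ ^ 2) := by
  have hσ2 : (0:ℝ) < σ ^ 2 := by positivity
  have hderiv : ∀ x ∈ Set.Ici R,
      HasDerivAt (fun t => -(σ ^ 2 / 2) * Real.exp (-t ^ 2 / σ ^ 2))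
        (x * Real.exp (-x ^ 2 / σ ^ 2)) x := by
    intro x _
    have h1 : HasDerivAt (fun t : ℝ => -t ^ 2 / σ ^ 2) (-(2 * x) / σ ^ 2) x := by
      simpa using ((hasDerivAt_pow 2 x).neg.div_const (σ ^ 2))
    have h2 := (h1.exp).const_mul (-(σ ^ 2 / 2))
    convert h2 using 1
    · rfl
    · rfl
    have hσ0 : σ ≠ 0 := hσ.ne'
    field_simp
  have htends : Filter.Tendsto (fun t => -(σ ^ 2 / 2) * Real.exp (-t ^ 2 / σ ^ 2))
      Filter.atTop (nhds 0) := by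
    have h1 : Filter.Tendsto (fun t : ℝ => -t ^ 2 / σ ^ 2) Filter.atTop Filter.atBot := by
      apply Filter.Tendsto.atBot_div_const hσ2
      simpa using (Filter.tendsto_pow_atTop (n := 2) (by norm_num)).neg
    have h2 := (Real.tendsto_exp_atBot.comp h1).const_mul (-(σ ^ 2 / 2))
    simpa using h2
  have hpos : ∀ x ∈ Set.Ioi R, 0 ≤ x * Real.exp (-x ^ 2 / σ ^ 2) := by
    intro x hx
    have : 0 < x := lt_trans hR hx
    positivity
  have hval := integral_Ioi_of_hasDerivAt_of_nonneg' hderiv hpos htends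
  have hint : IntegrableOn (fun x => x * Real.exp (-x ^ 2 / σ ^ 2)) (Set.Ioi R) :=
    integrableOn_Ioi_deriv_of_nonneg' hderiv hpos htends
  have hval' : ∫ x in Set.Ioi R, x * Real.exp (-x ^ 2 / σ ^ 2)
      = σ ^ 2 / 2 * Real.exp (-R ^ 2 / σ ^ 2) := by
    rw [hval]; ring
  have hexpint : IntegrableOn (fun t => Real.exp (-t ^ 2 / σ ^ 2)) (Set.Ioi R) := by
    have h := (integrable_exp_neg_mul_sq (b := (σ ^ 2)⁻¹) (by positivity)).integrableOn
      (s := Set.Ioi R)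
    convert h using 2 with t
    rw [neg_div, div_eq_inv_mul, neg_mul]
  refine ⟨hexpint, ?_⟩
  have hmono : ∫ t in Set.Ioi R, Real.exp (-t ^ 2 / σ ^ 2)
      ≤ ∫ t in Set.Ioi R, R⁻¹ * (t * Real.exp (-t ^ 2 / σ ^ 2)) := by
    apply setIntegral_mono_on hexpint (hint.const_mul _) measurableSet_Ioi
    intro t ht
    have htR : R < t := ht
    have h1 : (1:ℝ) ≤ R⁻¹ * t := by
      rw [← div_eq_inv_mul, le_div_iff₀ hR]
      linarith
    calc Real.exp (-t ^ 2 / σ ^ 2) = 1 * Real.exp (-t ^ 2 / σ ^ 2) := by ring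
      _ ≤ (R⁻¹ * t) * Real.exp (-t ^ 2 / σ ^ 2) := by
          apply mul_le_mul_of_nonneg_right h1 (Real.exp_nonneg _)
      _ = R⁻¹ * (t * Real.exp (-t ^ 2 / σ ^ 2)) := by ring
  rw [MeasureTheory.integral_const_mul, hval'] at hmono
  calc ∫ t in Set.Ioi R, Real.exp (-t ^ 2 / σ ^ 2)
      ≤ R⁻¹ * (σ ^ 2 / 2 * Real.exp (-R ^ 2 / σ ^ 2)) := hmono
    _ = σ ^ 2 / (2 * R) * Real.exp (-R ^ 2 / σ ^ 2) := by field_simp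

lemma tail_exp_bound {α : Type*} [MeasurableSpace α] (m : Measure α) [IsProbabilityMeasure m]
    (f : α → ℝ) (hf : Measurable f) (h0 : ∀ a, 0 ≤ f a)
    (σ R δ : ℝ) (hσ : 0 < σ) (hR : 0 < R) (hδ0 : 0 < δ)
    (htail : ∀ t : ℝ, 0 < t → m {a | t ≤ f a} ≤ ENNReal.ofReal (2 * Real.exp (-t ^ 2 / σ ^ 2)))
    (hexpR : Real.exp (-R ^ 2 / σ ^ 2) = δ / 4) :
    ∫ a in {a | R ≤ f a}, f a ∂m ≤ R * (δ / 2) + σ ^ 2 / (2 * R) * (δ / 2) := by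
  have hBmeas : MeasurableSet {a | R ≤ f a} := measurableSet_le measurable_const hf
  set mB := m.restrict {a | R ≤ f a} with hmB
  have hT : ∫ a in {a | R ≤ f a}, f a ∂m
      = (∫⁻ a, ENNReal.ofReal (f a) ∂mB).toReal := by
    rw [integral_eq_lintegral_of_nonneg_ae (Filter.Eventually.of_forall h0)
      hf.aestronglyMeasurable.restrict]
  have hlayer : ∫⁻ a, ENNReal.ofReal (f a) ∂mB
      = ∫⁻ t in Set.Ioi (0:ℝ), mB {a | t < f a} :=
    lintegral_eq_lintegral_meas_lt mB (Filter.Eventually.of_forall h0) hf.aemeasurable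
  have hsplit : ∫⁻ t in Set.Ioi (0:ℝ), mB {a | t < f a}
      = (∫⁻ t in Set.Ioc (0:ℝ) R, mB {a | t < f a})
        + ∫⁻ t in Set.Ioi R, mB {a | t < f a} := by
    rw [← Set.Ioc_union_Ioi_eq_Ioi hR.le,
      lintegral_union measurableSet_Ioi (Set.Ioc_disjoint_Ioi le_rfl)]
  have hmBle : ∀ t : ℝ, mB {a | t < f a} ≤ m {a | R ≤ f a} := by
    intro t
    rw [hmB, Measure.restrict_apply' hBmeas]
    exact measure_mono Set.inter_subset_right
  have hmR : m {a | R ≤ f a} ≤ ENNReal.ofReal (δ / 2) := by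
    have := htail R hR
    rwa [hexpR, show 2 * (δ / 4) = δ / 2 by ring] at this
  have hbound1 : ∫⁻ t in Set.Ioc (0:ℝ) R, mB {a | t < f a}
      ≤ ENNReal.ofReal (δ / 2) * ENNReal.ofReal R := by
    calc ∫⁻ t in Set.Ioc (0:ℝ) R, mB {a | t < f a}
        ≤ ∫⁻ _ in Set.Ioc (0:ℝ) R, ENNReal.ofReal (δ / 2) := by
          apply lintegral_mono
          intro t
          exact (hmBle t).trans hmR
      _ = ENNReal.ofReal (δ / 2) * ENNReal.ofReal R := by
          rw [lintegral_const, Measure.restrict_apply MeasurableSet.univ, Set.univ_inter,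
            Real.volume_Ioc]
          norm_num
  have hgauss := gauss_tail_aux hσ hR
  have hbound2 : ∫⁻ t in Set.Ioi R, mB {a | t < f a}
      ≤ ENNReal.ofReal (σ ^ 2 / (2 * R) * (δ / 2)) := by
    have step1 : ∫⁻ t in Set.Ioi R, mB {a | t < f a}
        ≤ ∫⁻ t in Set.Ioi R, ENNReal.ofReal (2 * Real.exp (-t ^ 2 / σ ^ 2)) := by
      apply setLIntegral_mono (by fun_prop) -- measurability of g
      intro t ht
      have htpos : 0 < t := hR.trans ht
      calc mB {a | t < f a} ≤ m {a | t < f a} := Measure.restrict_le_self _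
        _ ≤ m {a | t ≤ f a} := measure_mono (fun a ha => le_of_lt (Set.mem_setOf.mp ha))
        _ ≤ ENNReal.ofReal (2 * Real.exp (-t ^ 2 / σ ^ 2)) := htail t htpos
    have step2 : ∫⁻ t in Set.Ioi R, ENNReal.ofReal (2 * Real.exp (-t ^ 2 / σ ^ 2))
        = ENNReal.ofReal (∫ t in Set.Ioi R, 2 * Real.exp (-t ^ 2 / σ ^ 2)) := by
      rw [ofReal_integral_eq_lintegral_ofReal (hgauss.1.const_mul 2)
        (Filter.Eventually.of_forall (fun t => by positivity))]
    have step3 : ∫ t in Set.Ioi R, 2 * Real.exp (-t ^ 2 / σ ^ 2)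
        ≤ σ ^ 2 / (2 * R) * (δ / 2) := by
      rw [MeasureTheory.integral_const_mul]
      have := hgauss.2
      rw [hexpR] at this
      nlinarith [this]
    exact step1.trans (step2.trans_le (ENNReal.ofReal_le_ofReal step3))
  have htotal : ∫⁻ a, ENNReal.ofReal (f a) ∂mB
      ≤ ENNReal.ofReal (R * (δ / 2) + σ ^ 2 / (2 * R) * (δ / 2)) := by
    rw [hlayer, hsplit]
    calc (∫⁻ t in Set.Ioc (0:ℝ) R, mB {a | t < f a}) + ∫⁻ t in Set.Ioi R, mB {a | t < f a}
        ≤ ENNReal.ofReal (δ / 2) * ENNReal.ofReal R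
          + ENNReal.ofReal (σ ^ 2 / (2 * R) * (δ / 2)) := add_le_add hbound1 hbound2
      _ = ENNReal.ofReal (R * (δ / 2) + σ ^ 2 / (2 * R) * (δ / 2)) := by
          rw [← ENNReal.ofReal_mul (by positivity), ← ENNReal.ofReal_add (by positivity)
            (by positivity)]
          ring_nf
  rw [hT]
  exact ENNReal.toReal_le_of_le_ofReal (by positivity) htotal

set_option maxHeartbeats 2000000 in
theorem subgaussian_truncation (d : ℕ) (σ δ : ℝ) (hσ : 0 < σ) (hδ : δ ∈ Set.Ioo (0 : ℝ) 1)
    {Ω : Type*} [MeasurableSpace Ω] (μ : Measure Ω) [IsProbabilityMeasure μ]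
    (X : Ω → EuclideanSpace ℝ (Fin d)) (hXmeas : Measurable X)
    (hXint : Integrable X μ) (hmean : ∫ ω, X ω ∂μ = 0)
    (htail : ∀ t : ℝ, 0 < t →
      μ {ω | t ≤ ‖X ω‖} ≤ ENNReal.ofReal (2 * Real.exp (-t ^ 2 / σ ^ 2))) :
    ∃ (Ω' : Type) (_ : MeasurableSpace Ω') (μ' : Measure Ω')
      (_ : IsProbabilityMeasure μ') (X' Xbar : Ω' → EuclideanSpace ℝ (Fin d)),
      Measurable X' ∧ Measurable Xbar ∧
      Measure.map X' μ' = Measure.map X μ ∧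
      Integrable Xbar μ' ∧
      (∫ ω, Xbar ω ∂μ') = 0 ∧
      ENNReal.ofReal (1 - δ) ≤ μ' {ω | Xbar ω = X' ω} ∧
      (∀ᵐ ω ∂μ', ‖Xbar ω‖ < 3 * σ * Real.sqrt (Real.log (4 / δ))) := by
  classical
  obtain ⟨hδ0, hδ1⟩ := hδ
  -- basic numeric facts
  have h4δpos : (0:ℝ) < 4 / δ := by positivity
  have hlog1 : 1 < Real.log (4 / δ) := by
    rw [Real.lt_log_iff_exp_lt h4δpos]
    have h1 := Real.exp_one_lt_d9
    have h2 : (4:ℝ) ≤ 4 / δ := by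
      rw [le_div_iff₀ hδ0]; nlinarith
    linarith
  have hL0 : (0:ℝ) ≤ Real.log (4 / δ) := by linarith
  have hsqrt1 : 1 < Real.sqrt (Real.log (4 / δ)) := by
    rw [show (1:ℝ) = Real.sqrt 1 by simp]
    exact Real.sqrt_lt_sqrt (by norm_num) hlog1
  set R := σ * Real.sqrt (Real.log (4 / δ)) with hRdef
  have hσR : σ < R := by nlinarith
  have hR : 0 < R := lt_trans hσ hσR
  have hexpR : Real.exp (-R ^ 2 / σ ^ 2) = δ / 4 := by
    have hsq : R ^ 2 = σ ^ 2 * Real.log (4 / δ) := by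
      rw [hRdef, mul_pow, Real.sq_sqrt hL0]
    rw [hsq, show -(σ ^ 2 * Real.log (4 / δ)) / σ ^ 2 = -Real.log (4 / δ) by
      field_simp]
    rw [Real.exp_neg, Real.exp_log h4δpos, inv_div]
  -- push forward the law of X
  set m : Measure (EuclideanSpace ℝ (Fin d)) := Measure.map X μ with hmdef
  haveI : IsProbabilityMeasure m := Measure.isProbabilityMeasure_map hXmeas.aemeasurable
  have hmint : Integrable (fun x : EuclideanSpace ℝ (Fin d) => x) m := by
    have h : Integrable (id : EuclideanSpace ℝ (Fin d) → EuclideanSpace ℝ (Fin d)) m := by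
      rw [hmdef, integrable_map_measure aestronglyMeasurable_id hXmeas.aemeasurable]
      simpa [Function.comp] using hXint
    exact h
  have hmmean : ∫ x, x ∂m = 0 := by
    have h := integral_map (μ := μ) (f := fun x : EuclideanSpace ℝ (Fin d) => x)
      hXmeas.aemeasurable (aestronglyMeasurable_id)
    rw [hmdef, h]
    exact hmean
  have hmtail : ∀ t : ℝ, 0 < t →
      m {x : EuclideanSpace ℝ (Fin d) | t ≤ ‖x‖}
        ≤ ENNReal.ofReal (2 * Real.exp (-t ^ 2 / σ ^ 2)) := by
    intro t ht
    rw [hmdef, Measure.map_apply hXmeas (measurableSet_le measurable_const measurable_norm)]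
    exact htail t ht
  -- the truncation event
  set A : Set (EuclideanSpace ℝ (Fin d)) := {x | ‖x‖ < R} with hAdef
  have hA : MeasurableSet A := measurableSet_lt measurable_norm measurable_const
  have hAc : Aᶜ = {x : EuclideanSpace ℝ (Fin d) | R ≤ ‖x‖} := by
    ext x; simp [hAdef, not_lt]
  have hmAc : m Aᶜ ≤ ENNReal.ofReal (δ / 2) := by
    rw [hAc]
    have := hmtail R hR
    rwa [hexpR, show 2 * (δ / 4) = δ / 2 by ring] at this
  -- tail expectation bound
  have hT : ∫ x in Aᶜ, ‖x‖ ∂m ≤ R * (δ / 2) + σ ^ 2 / (2 * R) * (δ / 2) := by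
    rw [hAc]
    exact tail_exp_bound m (fun x => ‖x‖) measurable_norm norm_nonneg σ R δ hσ hR hδ0
      hmtail hexpR
  -- the Bernoulli measure on Bool
  set ν : Measure Bool :=
    ENNReal.ofReal (1 - δ / 2) • Measure.dirac false
      + ENNReal.ofReal (δ / 2) • Measure.dirac true with hνdef
  have hνfalse : ν {false} = ENNReal.ofReal (1 - δ / 2) := by
    simp [hνdef, Measure.dirac_apply']
  have hνuniv : ν Set.univ = 1 := by
    simp [hνdef]
    rw [← ENNReal.ofReal_add (by linarith) (by positivity), ← ENNReal.ofReal_one]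
    norm_num
  haveI hνprob : IsProbabilityMeasure ν := ⟨hνuniv⟩
  -- the product space
  refine ⟨EuclideanSpace ℝ (Fin d) × Bool, inferInstance, m.prod ν, inferInstance, Prod.fst, ?_⟩
  set μ' : Measure (EuclideanSpace ℝ (Fin d) × Bool) := m.prod ν with hμ'def
  set S : Set (EuclideanSpace ℝ (Fin d) × Bool) := A ×ˢ ({false} : Set Bool) with hSdef
  have hS : MeasurableSet S := hA.prod (MeasurableSet.singleton false)
  set I : EuclideanSpace ℝ (Fin d) := ∫ p in S, p.1 ∂μ' with hIdef
  set q : ℝ := (μ' Sᶜ).toReal with hqdef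
  set c : EuclideanSpace ℝ (Fin d) := -(q⁻¹) • I with hcdef
  -- basic facts about S and q
  have hνfr : (ν {false}).toReal = 1 - δ / 2 := by
    rw [hνfalse, ENNReal.toReal_ofReal (by linarith)]
  have hμ'S : μ' S = m A * ν {false} := by
    rw [hμ'def, hSdef, Measure.prod_prod]
  have honem : (1 : ℝ≥0∞) = ENNReal.ofReal (δ / 2) + ENNReal.ofReal (1 - δ / 2) := by
    rw [← ENNReal.ofReal_add (by positivity) (by linarith)]
    norm_num
  have hmA : ENNReal.ofReal (1 - δ / 2) ≤ m A := by
    have h1 : m A = 1 - m Aᶜ := by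
      rw [← prob_compl_eq_one_sub hA.compl, compl_compl]
    calc ENNReal.ofReal (1 - δ / 2) = 1 - ENNReal.ofReal (δ / 2) := by
          rw [honem, ENNReal.add_sub_cancel_left ENNReal.ofReal_ne_top]
      _ ≤ 1 - m Aᶜ := tsub_le_tsub_left hmAc 1
      _ = m A := h1.symm
  have hμ'Slb : ENNReal.ofReal (1 - δ) ≤ μ' S := by
    rw [hμ'S, hνfalse]
    calc ENNReal.ofReal (1 - δ) ≤ ENNReal.ofReal ((1 - δ / 2) * (1 - δ / 2)) :=
          ENNReal.ofReal_le_ofReal (by nlinarith)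
      _ = ENNReal.ofReal (1 - δ / 2) * ENNReal.ofReal (1 - δ / 2) :=
          ENNReal.ofReal_mul (by linarith)
      _ ≤ m A * ENNReal.ofReal (1 - δ / 2) := mul_le_mul' hmA le_rfl
  have hμ'Sub : μ' S ≤ ENNReal.ofReal (1 - δ / 2) := by
    rw [hμ'S, hνfalse]
    calc m A * ENNReal.ofReal (1 - δ / 2) ≤ 1 * ENNReal.ofReal (1 - δ / 2) :=
          mul_le_mul' prob_le_one le_rfl
      _ = ENNReal.ofReal (1 - δ / 2) := one_mul _
  have hq2 : δ / 2 ≤ q := by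
    have h1 : ENNReal.ofReal (δ / 2) ≤ μ' Sᶜ := by
      rw [prob_compl_eq_one_sub hS]
      calc ENNReal.ofReal (δ / 2) = 1 - ENNReal.ofReal (1 - δ / 2) := by
            rw [honem, ENNReal.add_sub_cancel_right ENNReal.ofReal_ne_top]
        _ ≤ 1 - μ' S := tsub_le_tsub_left hμ'Sub 1
    calc δ / 2 = (ENNReal.ofReal (δ / 2)).toReal := by
          rw [ENNReal.toReal_ofReal (by positivity)]
      _ ≤ q := ENNReal.toReal_mono (measure_ne_top μ' _) h1
  have hqpos : 0 < q := lt_of_lt_of_le (by positivity) hq2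
  -- the value of I
  have hres : μ'.restrict S = (m.restrict A).prod (ν.restrict ({false} : Set Bool)) := by
    rw [hμ'def, hSdef, Measure.prod_restrict]
  have hI : I = (ν {false}).toReal • ∫ x in A, x ∂m := by
    have hmap : Measure.map Prod.fst ((m.restrict A).prod (ν.restrict ({false} : Set Bool)))
        = (ν {false}) • m.restrict A := by
      rw [Measure.map_fst_prod, Measure.restrict_apply_univ]
    have h2 := integral_map (μ := (m.restrict A).prod (ν.restrict ({false} : Set Bool)))
      (φ := Prod.fst) measurable_fst.aemeasurable
      (f := fun x : EuclideanSpace ℝ (Fin d) => x) aestronglyMeasurable_id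
    rw [hIdef]
    show ∫ p, p.1 ∂(μ'.restrict S) = _
    rw [hres, ← h2, hmap, integral_smul_measure]
  have hInorm : ‖I‖ ≤ ∫ x in Aᶜ, ‖x‖ ∂m := by
    have hsum := integral_add_compl hA hmint
    rw [hmmean] at hsum
    have hAeq : ∫ x in A, (fun x => x) x ∂m = - ∫ x in Aᶜ, (fun x => x) x ∂m :=
      eq_neg_of_add_eq_zero_left hsum
    rw [hI, norm_smul, Real.norm_eq_abs, abs_of_nonneg ENNReal.toReal_nonneg]
    have hle1 : (ν {false}).toReal ≤ 1 := by rw [hνfr]; linarith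
    calc (ν {false}).toReal * ‖∫ x in A, x ∂m‖ ≤ 1 * ‖∫ x in A, x ∂m‖ :=
          mul_le_mul_of_nonneg_right hle1 (norm_nonneg _)
      _ = ‖∫ x in Aᶜ, (fun x => x) x ∂m‖ := by rw [one_mul, hAeq, norm_neg]
      _ ≤ ∫ x in Aᶜ, ‖x‖ ∂m := norm_integral_le_integral_norm _
  have hcnorm : ‖c‖ < 3 * σ * Real.sqrt (Real.log (4 / δ)) := by
    have h1 : ‖c‖ = q⁻¹ * ‖I‖ := by
      rw [hcdef, norm_smul, Real.norm_eq_abs, abs_neg, abs_of_nonneg (inv_nonneg.mpr hqpos.le)]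
    have h2 : q⁻¹ ≤ (δ / 2)⁻¹ := by
      apply inv_anti₀ (by positivity) hq2
    have h3 : ‖I‖ ≤ R * (δ / 2) + σ ^ 2 / (2 * R) * (δ / 2) := hInorm.trans hT
    have h4 : ‖c‖ ≤ (δ / 2)⁻¹ * (R * (δ / 2) + σ ^ 2 / (2 * R) * (δ / 2)) := by
      rw [h1]
      exact mul_le_mul h2 h3 (norm_nonneg _) (by positivity)
    have h5 : (δ / 2)⁻¹ * (R * (δ / 2) + σ ^ 2 / (2 * R) * (δ / 2)) = R + σ ^ 2 / (2 * R) := by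
      field_simp
    have h6 : σ ^ 2 / (2 * R) ≤ σ / 2 := by
      rw [div_le_div_iff₀ (by positivity) (by norm_num)]
      nlinarith
    have h7 : 3 * σ * Real.sqrt (Real.log (4 / δ)) = 3 * R := by rw [hRdef]; ring
    rw [h7]
    nlinarith [h4, h5, h6]
  -- integrability of Xbar
  have hXbarMeas : Measurable (fun p : EuclideanSpace ℝ (Fin d) × Bool =>
      if p ∈ S then p.1 else c) := Measurable.ite hS measurable_fst measurable_const
  have hXbarInt : Integrable (fun p : EuclideanSpace ℝ (Fin d) × Bool =>
      if p ∈ S then p.1 else c) μ' := by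
    apply Integrable.mono' (integrable_const (R + ‖c‖)) hXbarMeas.aestronglyMeasurable
    apply Filter.Eventually.of_forall
    intro p
    by_cases hp : p ∈ S
    · rw [if_pos hp]
      have h1 : ‖p.1‖ < R := hp.1
      have h2 : (0:ℝ) ≤ ‖c‖ := norm_nonneg _
      linarith
    · rw [if_neg hp]
      linarith [hR, norm_nonneg c]
  refine ⟨fun p => if p ∈ S then p.1 else c, measurable_fst, hXbarMeas, ?_, hXbarInt, ?_, ?_, ?_⟩
  · -- law of X' = law of X
    rw [hμ'def, Measure.map_fst_prod, hνuniv, one_smul]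
  · -- mean zero
    have hsplit := integral_add_compl hS hXbarInt
    rw [← hsplit]
    have e1 : ∫ p in S, (if p ∈ S then p.1 else c) ∂μ' = I := by
      rw [hIdef]
      apply setIntegral_congr_fun hS
      intro p hp
      exact if_pos hp
    have e2 : ∫ p in Sᶜ, (if p ∈ S then p.1 else c) ∂μ' = q • c := by
      have := setIntegral_congr_fun (μ := μ') hS.compl
        (f := fun p : EuclideanSpace ℝ (Fin d) × Bool => if p ∈ S then p.1 else c)
        (g := fun _ => c) (fun p hp => if_neg hp)
      rw [this, setIntegral_const, hqdef, measureReal_def]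
    rw [e1, e2, hcdef, smul_smul]
    have : q * -q⁻¹ = -1 := by field_simp
    rw [this, neg_one_smul, add_neg_cancel]
  · -- coupling probability
    refine le_trans hμ'Slb (measure_mono ?_)
    intro p hp
    simp only [Set.mem_setOf_eq]
    rw [if_pos hp]
  · -- norm bound
    apply Filter.Eventually.of_forall
    intro p
    by_cases hp : p ∈ S
    · simp only [if_pos hp]
      have h1 : ‖p.1‖ < R := hp.1
      have h7 : 3 * σ * Real.sqrt (Real.log (4 / δ)) = 3 * R := by rw [hRdef]; ring
      rw [h7]
      linarith
    · simp only [if_neg hp]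
      exact hcnorm
end

section
/- Let X be a random vector in R^d with E[X] = 0 and P(||X|| >= t) <= 2 exp(-t^2/sigma^2) for all t > 0, and let r = sigma sqrt(ln(4/delta)) for delta in (0,1). Then ||E[X | ||X|| <= r]|| <= delta*r + delta*sigma/2. -/
open MeasureTheory

lemma gauss_tail_eq (b c : ℝ) (hb : 0 < b) :
    ∫ t in Set.Ioi c, t * Real.exp (-b * t ^ 2) = Real.exp (-b * c ^ 2) / (2 * b) := by
  have hderiv : ∀ x ∈ Set.Ici c,
      HasDerivAt (fun x : ℝ => -Real.exp (-b * x ^ 2) / (2 * b)) (x * Real.exp (-b * x ^ 2)) x := by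
    intro x _
    have h1 : HasDerivAt (fun x : ℝ => -b * x ^ 2) (-b * (2 * x)) x := by
      simpa using (hasDerivAt_pow 2 x).const_mul (-b)
    have h2 := (h1.exp.neg).div_const (2 * b)
    refine h2.congr_deriv ?_
    rw [div_eq_iff (mul_ne_zero two_ne_zero hb.ne')]
    ring
  have htend : Filter.Tendsto (fun x : ℝ => -Real.exp (-b * x ^ 2) / (2 * b))
      Filter.atTop (nhds 0) := by
    have : Filter.Tendsto (fun x : ℝ => -b * x ^ 2) Filter.atTop Filter.atBot := by
      apply Filter.Tendsto.const_mul_atTop_of_neg (neg_neg_iff_pos.mpr hb)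
      exact Filter.tendsto_pow_atTop (by norm_num)
    have := (Real.tendsto_exp_atBot.comp this).neg.div_const (2 * b)
    simpa using this
  rw [MeasureTheory.integral_Ioi_of_hasDerivAt_of_tendsto' hderiv
    ((integrable_mul_exp_neg_mul_sq hb).integrableOn) htend]
  ring

lemma gauss_tail_le (b c : ℝ) (hb : 0 < b) (hc : 0 < c) :
    ∫ t in Set.Ioi c, Real.exp (-b * t ^ 2) ≤ Real.exp (-b * c ^ 2) / (2 * b * c) := by
  have h1 : ∫ t in Set.Ioi c, Real.exp (-b * t ^ 2) ≤
      ∫ t in Set.Ioi c, (t * Real.exp (-b * t ^ 2)) / c := by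
    apply setIntegral_mono_on ((integrable_exp_neg_mul_sq hb).integrableOn)
      (((integrable_mul_exp_neg_mul_sq hb).div_const c).integrableOn) measurableSet_Ioi
    intro x hx
    rw [le_div_iff₀ hc, mul_comm]
    exact mul_le_mul_of_nonneg_right (le_of_lt hx) (Real.exp_pos _).le
  rw [integral_div, gauss_tail_eq b c hb] at h1
  calc _ ≤ _ := h1
    _ = Real.exp (-b * c ^ 2) / (2 * b * c) := by rw [div_div]

theorem truncated_conditional_mean_bound (d : ℕ) (σ δ r : ℝ) (hσ : 0 < σ)
    (hδ : δ ∈ Set.Ioo (0 : ℝ) 1) (hr : r = σ * Real.sqrt (Real.log (4 / δ)))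
    {Ω : Type*} [MeasurableSpace Ω] (μ : Measure Ω) [IsProbabilityMeasure μ]
    (X : Ω → EuclideanSpace ℝ (Fin d)) (hXmeas : Measurable X)
    (hXint : Integrable X μ) (hmean : ∫ ω, X ω ∂μ = 0)
    (htail : ∀ t : ℝ, 0 < t →
      μ {ω | t ≤ ‖X ω‖} ≤ ENNReal.ofReal (2 * Real.exp (-t ^ 2 / σ ^ 2))) :
    ‖(μ {ω | ‖X ω‖ ≤ r}).toReal⁻¹ • ∫ ω in {ω | ‖X ω‖ ≤ r}, X ω ∂μ‖ ≤
      δ * r + δ * σ / 2 := by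
  obtain ⟨hδ0, hδ1⟩ := hδ
  set s : Set Ω := {ω | ‖X ω‖ ≤ r} with hs_def
  have hs : MeasurableSet s := measurableSet_le hXmeas.norm measurable_const
  have hL1 : (1 : ℝ) ≤ Real.log (4 / δ) := by
    rw [Real.le_log_iff_exp_le (by positivity)]
    have h4 : (4 : ℝ) ≤ 4 / δ := by
      rw [le_div_iff₀ hδ0]; nlinarith
    nlinarith [Real.exp_one_lt_d9]
  have hσr : σ ≤ r := by
    rw [hr]
    nth_rewrite 1 [← mul_one σ]
    refine mul_le_mul_of_nonneg_left ?_ hσ.le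
    rw [show (1 : ℝ) = Real.sqrt 1 by simp]
    exact Real.sqrt_le_sqrt hL1
  have hr0 : 0 < r := lt_of_lt_of_le hσ hσr
  have hb : 0 < (σ ^ 2)⁻¹ := by positivity
  have hexp : Real.exp (-r ^ 2 / σ ^ 2) = δ / 4 := by
    have hrsq : r ^ 2 = σ ^ 2 * Real.log (4 / δ) := by
      rw [hr, mul_pow, Real.sq_sqrt (by linarith)]
    have h2 : -r ^ 2 / σ ^ 2 = -Real.log (4 / δ) := by
      rw [hrsq]; field_simp
    rw [h2, Real.exp_neg, Real.exp_log (by positivity)]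
    field_simp
  have hcompl_sub : sᶜ ⊆ {ω | r ≤ ‖X ω‖} := by
    intro ω hω
    simp only [hs_def, Set.mem_compl_iff, Set.mem_setOf_eq, not_le] at hω
    exact le_of_lt hω
  have hμc : μ sᶜ ≤ ENNReal.ofReal (δ / 2) := by
    calc μ sᶜ ≤ μ {ω | r ≤ ‖X ω‖} := measure_mono hcompl_sub
      _ ≤ ENNReal.ofReal (2 * Real.exp (-r ^ 2 / σ ^ 2)) := htail r hr0
      _ = ENNReal.ofReal (δ / 2) := by rw [hexp]; ring_nf
  have hμcR : (μ sᶜ).toReal ≤ δ / 2 :=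
    ENNReal.toReal_le_of_le_ofReal (by positivity) hμc
  have hsum : (μ s).toReal + (μ sᶜ).toReal = 1 := by
    rw [← ENNReal.toReal_add (measure_ne_top μ s) (measure_ne_top μ sᶜ),
      measure_add_measure_compl hs, measure_univ, ENNReal.toReal_one]
  have hp2 : (1 : ℝ) / 2 ≤ (μ s).toReal := by linarith
  have hp0 : 0 < (μ s).toReal := by linarith
  have hXnint : IntegrableOn (fun ω => ‖X ω‖) sᶜ μ := hXint.norm.integrableOn
  have hsplit : ∫ ω in s, X ω ∂μ = -∫ ω in sᶜ, X ω ∂μ := by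
    have h := integral_add_compl hs hXint
    rw [hmean] at h
    exact eq_neg_of_add_eq_zero_left h
  -- the key tail-integral bound
  have key : ∫ ω in sᶜ, ‖X ω‖ ∂μ ≤ δ * r / 2 + δ * σ ^ 2 / (4 * r) := by
    have hofReal : ENNReal.ofReal (∫ ω in sᶜ, ‖X ω‖ ∂μ)
        = ∫⁻ t in Set.Ioi (0 : ℝ), (μ.restrict sᶜ) {ω | t < ‖X ω‖} := by
      rw [ofReal_integral_eq_lintegral_ofReal hXnint (ae_of_all _ fun ω => norm_nonneg _),
        lintegral_eq_lintegral_meas_lt _ (ae_of_all _ fun ω => norm_nonneg _)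
          hXmeas.norm.aemeasurable]
    have hsplitI : (∫⁻ t in Set.Ioi (0 : ℝ), (μ.restrict sᶜ) {ω | t < ‖X ω‖})
        = (∫⁻ t in Set.Ioc (0 : ℝ) r, (μ.restrict sᶜ) {ω | t < ‖X ω‖})
          + ∫⁻ t in Set.Ioi r, (μ.restrict sᶜ) {ω | t < ‖X ω‖} := by
      rw [← Set.Ioc_union_Ioi_eq_Ioi hr0.le,
        lintegral_union measurableSet_Ioi (Set.Ioc_disjoint_Ioi le_rfl)]
    have h1 : (∫⁻ t in Set.Ioc (0 : ℝ) r, (μ.restrict sᶜ) {ω | t < ‖X ω‖})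
        ≤ ENNReal.ofReal (δ * r / 2) := by
      calc (∫⁻ t in Set.Ioc (0 : ℝ) r, (μ.restrict sᶜ) {ω | t < ‖X ω‖})
          ≤ ∫⁻ _ in Set.Ioc (0 : ℝ) r, ENNReal.ofReal (δ / 2) := by
            refine setLIntegral_mono measurable_const fun t _ => ?_
            calc (μ.restrict sᶜ) {ω | t < ‖X ω‖} ≤ (μ.restrict sᶜ) Set.univ :=
                  measure_mono (Set.subset_univ _)
              _ = μ sᶜ := by rw [Measure.restrict_apply_univ]
              _ ≤ _ := hμc
        _ = ENNReal.ofReal (δ / 2) * volume (Set.Ioc (0 : ℝ) r) := setLIntegral_const _ _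
        _ ≤ ENNReal.ofReal (δ * r / 2) := by
            rw [Real.volume_Ioc, ← ENNReal.ofReal_mul (by positivity)]
            exact ENNReal.ofReal_le_ofReal (by nlinarith)
    have h2 : (∫⁻ t in Set.Ioi r, (μ.restrict sᶜ) {ω | t < ‖X ω‖})
        ≤ ENNReal.ofReal (δ * σ ^ 2 / (4 * r)) := by
      have hmeasg : Measurable fun t : ℝ => ENNReal.ofReal (2 * Real.exp (-(σ ^ 2)⁻¹ * t ^ 2)) := by
        apply Measurable.ennreal_ofReal
        fun_prop
      calc (∫⁻ t in Set.Ioi r, (μ.restrict sᶜ) {ω | t < ‖X ω‖})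
          ≤ ∫⁻ t in Set.Ioi r, ENNReal.ofReal (2 * Real.exp (-(σ ^ 2)⁻¹ * t ^ 2)) := by
            refine setLIntegral_mono hmeasg fun t ht => ?_
            have h3 : (μ.restrict sᶜ) {ω | t < ‖X ω‖} ≤ μ {ω | t ≤ ‖X ω‖} := by
              refine le_trans (Measure.restrict_le_self _) (measure_mono (Set.setOf_subset_setOf.mpr fun ω hω => le_of_lt hω))
            refine h3.trans ((htail t (hr0.trans ht)).trans (le_of_eq ?_))
            congr 2
            ring
        _ = ENNReal.ofReal (∫ t in Set.Ioi r, 2 * Real.exp (-(σ ^ 2)⁻¹ * t ^ 2)) := by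
            rw [ofReal_integral_eq_lintegral_ofReal
              (((integrable_exp_neg_mul_sq hb).const_mul 2).integrableOn)
              (ae_of_all _ fun t => by positivity)]
        _ ≤ ENNReal.ofReal (δ * σ ^ 2 / (4 * r)) := by
            refine ENNReal.ofReal_le_ofReal ?_
            rw [MeasureTheory.integral_const_mul]
            have hg := gauss_tail_le ((σ ^ 2)⁻¹) r hb hr0
            have he : Real.exp (-(σ ^ 2)⁻¹ * r ^ 2) = δ / 4 := by
              rw [← hexp]; congr 1; field_simp
            rw [he] at hg
            have hrhs : δ / 4 / (2 * (σ ^ 2)⁻¹ * r) = δ * σ ^ 2 / (8 * r) := by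
              field_simp; ring
            rw [hrhs] at hg
            calc 2 * ∫ t in Set.Ioi r, Real.exp (-(σ ^ 2)⁻¹ * t ^ 2)
                ≤ 2 * (δ * σ ^ 2 / (8 * r)) := by linarith
              _ = δ * σ ^ 2 / (4 * r) := by ring
    have hle : ENNReal.ofReal (∫ ω in sᶜ, ‖X ω‖ ∂μ)
        ≤ ENNReal.ofReal (δ * r / 2 + δ * σ ^ 2 / (4 * r)) := by
      rw [hofReal, hsplitI, ENNReal.ofReal_add (by positivity) (by positivity)]
      exact add_le_add h1 h2
    exact (ENNReal.ofReal_le_ofReal_iff (by positivity)).mp hle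
  have hnormeq : ‖(μ s).toReal⁻¹ • ∫ ω in s, X ω ∂μ‖
      = (μ s).toReal⁻¹ * ‖∫ ω in sᶜ, X ω ∂μ‖ := by
    rw [hsplit, norm_smul, norm_neg, Real.norm_eq_abs, abs_of_nonneg (by positivity)]
  rw [hnormeq]
  have hnorm : ‖∫ ω in sᶜ, X ω ∂μ‖ ≤ δ * r / 2 + δ * σ ^ 2 / (4 * r) :=
    (norm_integral_le_integral_norm _).trans key
  have hinv : (μ s).toReal⁻¹ ≤ 2 := by
    rw [show (2 : ℝ) = ((1 : ℝ) / 2)⁻¹ by norm_num]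
    exact inv_anti₀ (by norm_num) hp2
  calc (μ s).toReal⁻¹ * ‖∫ ω in sᶜ, X ω ∂μ‖
      ≤ 2 * (δ * r / 2 + δ * σ ^ 2 / (4 * r)) := by
        refine mul_le_mul hinv hnorm (norm_nonneg _) (by norm_num)
    _ = δ * r + δ * σ ^ 2 / (2 * r) := by field_simp; ring
    _ ≤ δ * r + δ * σ / 2 := by
        have hss : δ * σ ^ 2 / (2 * r) ≤ δ * σ / 2 := by
          rw [div_le_div_iff₀ (by positivity) (by norm_num)]
          nlinarith [mul_le_mul_of_nonneg_left hσr (by positivity : (0:ℝ) ≤ δ * σ)]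
        linarith
end
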